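/- arXiv:1307.5482 — 7 statements merged into one kernel-verified Lean document; each statement's English description precedes it below -/
import Mathlib

section
/- For any two oriented circles c₁ = (x₁, r₁) and c₂ = (x₂, r₂) in the Euclidean plane, c₁ and c₂ are tangent as oriented circles if and only if the power P(c₁, c₂) = ‖x₁ − x₂‖² − (r₁ − r₂)² is zero. -/
open RealInnerProductSpace

noncomputable section

/-- The Euclidean plane. -/
abbrev Pl := EuclideanSpace ℝ (Fin 2)

/-- Two oriented circles `(x₁, r₁)` and `(x₂, r₂)` are tangent: the underlying circles
touch at a point `p` with the same oriented tangent line there. -/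
def OrientedTangent (x₁ : Pl) (r₁ : ℝ) (x₂ : Pl) (r₂ : ℝ) : Prop :=
  ∃ p : Pl, dist p x₁ = |r₁| ∧ dist p x₂ = |r₂| ∧ r₂ • (p - x₁) = r₁ • (p - x₂)

/-!
If the circles touch at `p`, put `u = p - x₁` and `v = p - x₂`. The orientation condition
`r₂ • u = r₁ • v` makes `u` and `v` parallel with `⟪u, v⟫ = r₁ r₂`, so
`‖x₁ - x₂‖² = ‖u - v‖² = r₁² - 2 r₁ r₂ + r₂² = (r₁ - r₂)²`.
Conversely, if `‖x₂ - x₁‖ = |r₁ - r₂|`, write `x₂ - x₁ = (r₁ - r₂) • w` with `‖w‖ = 1`;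
then `p = x₁ + r₁ • w = x₂ + r₂ • w` is a common point with `p - xᵢ = rᵢ • w`.
-/

section

variable {E : Type*} [NormedAddCommGroup E]

theorem inner_eq_mul_of_smul_eq_smul [InnerProductSpace ℝ E] {u v : E} {a b : ℝ}
    (hv : ‖v‖ = |b|) (huv : b • u = a • v) : ⟪u, v⟫ = a * b := by
  rcases eq_or_ne b 0 with rfl | hb
  · rw [abs_zero, norm_eq_zero] at hv
    simp [hv]
  · refine mul_left_cancel₀ hb ?_
    calc b * ⟪u, v⟫ = ⟪a • v, v⟫ := by rw [← huv, real_inner_smul_left]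
      _ = b * (a * b) := by
        rw [real_inner_smul_left, real_inner_self_eq_norm_sq, hv, sq_abs]
        ring

theorem norm_sub_sq_eq_of_smul_eq_smul [InnerProductSpace ℝ E] {u v : E} {a b : ℝ}
    (hu : ‖u‖ = |a|) (hv : ‖v‖ = |b|) (huv : b • u = a • v) : ‖u - v‖ ^ 2 = (a - b) ^ 2 := by
  rw [norm_sub_sq_real, inner_eq_mul_of_smul_eq_smul hv huv, hu, hv, sq_abs, sq_abs]
  ring

theorem exists_norm_eq_one_and_eq_smul_of_norm_eq_abs [NormedSpace ℝ E] [Nontrivial E]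
    {v : E} {c : ℝ} (hv : ‖v‖ = |c|) : ∃ w : E, ‖w‖ = 1 ∧ v = c • w := by
  rcases eq_or_ne c 0 with rfl | hc
  · obtain ⟨w, hw⟩ := exists_norm_eq E zero_le_one
    exact ⟨w, hw, by rwa [abs_zero, norm_eq_zero, ← zero_smul ℝ w] at hv⟩
  · refine ⟨c⁻¹ • v, ?_, by rw [smul_smul, mul_inv_cancel₀ hc, one_smul]⟩
    rw [norm_smul, hv, norm_inv, Real.norm_eq_abs, inv_mul_cancel₀ (abs_ne_zero.mpr hc)]

end

/-- Two oriented circles are tangent iff the power of one with respect to the other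
vanishes. -/
theorem orientedTangent_iff_power_eq_zero (x₁ x₂ : Pl) (r₁ r₂ : ℝ) :
    OrientedTangent x₁ r₁ x₂ r₂ ↔ ‖x₁ - x₂‖ ^ 2 - (r₁ - r₂) ^ 2 = 0 := by
  rw [sub_eq_zero]
  constructor
  · rintro ⟨p, h₁, h₂, h₁₂⟩
    rw [dist_eq_norm] at h₁ h₂
    rw [← norm_sub_sq_eq_of_smul_eq_smul h₁ h₂ h₁₂, sub_sub_sub_cancel_left, norm_sub_rev]
  · intro h
    rw [sq_eq_sq_iff_abs_eq_abs, abs_norm, norm_sub_rev] at h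
    obtain ⟨w, hw, hx⟩ := exists_norm_eq_one_and_eq_smul_of_norm_eq_abs h
    have hp₂ : x₁ + r₁ • w - x₂ = r₂ • w := by
      rw [← sub_add_eq_add_sub, ← neg_sub x₂, hx, ← neg_smul, ← add_smul]
      ring_nf
    refine ⟨x₁ + r₁ • w, ?_, ?_, ?_⟩
    · rw [dist_eq_norm, add_sub_cancel_left, norm_smul, hw, mul_one, Real.norm_eq_abs]
    · rw [dist_eq_norm, hp₂, norm_smul, hw, mul_one, Real.norm_eq_abs]
    · rw [hp₂, add_sub_cancel_left, smul_smul, smul_smul, mul_comm]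
end
end

section
/- Let c₁ = (x₁, r₁) and c₂ = (x₂, r₂) be distinct oriented circles, and let T = {(u, t) ∈ ℝ² × ℝ : ‖u‖ = 1 ∧ ⟪u, x₁⟫ − t = r₁ ∧ ⟪u, x₂⟫ − t = r₂} be their set of common oriented tangent lines. Then T has exactly 2 elements if P(c₁, c₂) > 0, exactly 1 element if P(c₁, c₂) = 0, and is empty if P(c₁, c₂) < 0. -/
/-!
A common tangent `(u, t)` is determined by its normal `u`, since `t = ⟪u, x₁⟫ - r₁`, and the
admissible normals are the unit vectors `u` with `⟪u, d⟫ = ρ`, where `d = x₁ - x₂` and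
`ρ = r₁ - r₂`. By Cauchy–Schwarz there are none unless `ρ² ≤ ‖d‖²`. For `d ≠ 0` the plane is
coordinatised by `⟪d, ·⟫` and the area form `ω d ·`, and the identity
`⟪d, u⟫² + ω(d, u)² = ‖d‖² ‖u‖²` shows that `u ↦ ω(d, u)` maps the admissible normals bijectively
onto the roots of `s² = ‖d‖² - ρ²`.
-/

open RealInnerProductSpace

noncomputable section

/-- The set of common oriented tangent lines of the oriented circles `(x₁, r₁)` and
`(x₂, r₂)`: an oriented line is a pair `(u, t)` with `‖u‖ = 1`, tangent to `(x, r)`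
iff `⟪u, x⟫ - t = r`. -/
def CommonTangents (x₁ : Pl) (r₁ : ℝ) (x₂ : Pl) (r₂ : ℝ) : Set (Pl × ℝ) :=
  {ut | ‖ut.1‖ = 1 ∧ ⟪ut.1, x₁⟫ - ut.2 = r₁ ∧ ⟪ut.1, x₂⟫ - ut.2 = r₂}

open Set EuclideanSpace

section InnerProductSpace

variable {E : Type*} [NormedAddCommGroup E] [InnerProductSpace ℝ E]

theorem sq_le_norm_sq_of_norm_eq_one_of_inner_eq {u d : E} {ρ : ℝ} (hu : ‖u‖ = 1)
    (h : ⟪u, d⟫ = ρ) : ρ ^ 2 ≤ ‖d‖ ^ 2 := by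
  have hCS := abs_real_inner_le_norm u d
  rw [hu, one_mul, h] at hCS
  exact sq_le_sq.mpr (by rwa [abs_norm])

namespace Orientation

variable [Fact (Module.finrank ℝ E = 2)] (o : Orientation ℝ E (Fin 2))

local notation "ω" => o.areaForm
local notation "J" => o.rightAngleRotation

theorem eq_of_inner_eq_of_areaForm_eq {d u v : E} (hd : d ≠ 0) (h₁ : ⟪d, u⟫ = ⟪d, v⟫)
    (h₂ : ω d u = ω d v) : u = v := by
  have key := o.inner_sq_add_areaForm_sq d (u - v)
  rw [inner_sub_right, map_sub, h₁, h₂, sub_self, sub_self] at key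
  simpa [hd, sub_eq_zero] using key

theorem image_areaForm_unit_inner_eq {d : E} (hd : d ≠ 0) (ρ : ℝ) :
    ω d '' {u | ‖u‖ = 1 ∧ ⟪u, d⟫ = ρ} = {s | s ^ 2 = ‖d‖ ^ 2 - ρ ^ 2} := by
  have hd2 : ‖d‖ ^ 2 ≠ 0 := by positivity
  ext s
  constructor
  · rintro ⟨u, ⟨hu, hρ⟩, rfl⟩
    have key := o.inner_sq_add_areaForm_sq d u
    rw [real_inner_comm, hρ, hu] at key
    simp only [mem_ofPred_eq]
    linarith
  · intro hs
    set u := (‖d‖ ^ 2)⁻¹ • (ρ • d + s • J d) with hu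
    have hinner : ⟪d, u⟫ = ρ := by
      simp only [hu, smul_add, inner_add_right, real_inner_smul_right, real_inner_self_eq_norm_sq,
        inner_rightAngleRotation_right, areaForm_apply_self, neg_zero, mul_zero, add_zero]
      field_simp
    have harea : ω d u = s := by
      simp only [hu, map_add, map_smul, areaForm_apply_self, smul_eq_mul, mul_zero,
        o.areaForm_rightAngleRotation_right, real_inner_self_eq_norm_sq, zero_add]
      field_simp
    refine ⟨u, ⟨?_, by rwa [real_inner_comm]⟩, harea⟩
    have key := o.inner_sq_add_areaForm_sq d u
    rw [hinner, harea, mem_ofPred_eq.mp hs] at key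
    have : ‖u‖ ^ 2 = 1 := by
      apply mul_left_cancel₀ hd2
      linarith
    exact (pow_eq_one_iff_of_nonneg (norm_nonneg u) two_ne_zero).mp this

end Orientation

theorem encard_unit_inner_eq [Fact (Module.finrank ℝ E = 2)] {d : E} (hd : d ≠ 0) (ρ : ℝ) :
    {u : E | ‖u‖ = 1 ∧ ⟪u, d⟫ = ρ}.encard = {s : ℝ | s ^ 2 = ‖d‖ ^ 2 - ρ ^ 2}.encard := by
  have := FiniteDimensional.of_fact_finrank_eq_two (K := ℝ) (V := E)
  let o : Orientation ℝ E (Fin 2) := (Module.finBasisOfFinrankEq ℝ E Fact.out).orientation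
  rw [← o.image_areaForm_unit_inner_eq hd ρ, InjOn.encard_image]
  rintro u ⟨-, hu⟩ v ⟨-, hv⟩ h
  exact o.eq_of_inner_eq_of_areaForm_eq hd (by rw [real_inner_comm, hu, real_inner_comm, hv]) h

end InnerProductSpace

theorem Real.encard_setOf_sq_eq_of_pos {P : ℝ} (hP : 0 < P) : {s : ℝ | s ^ 2 = P}.encard = 2 := by
  have hroots : {s : ℝ | s ^ 2 = P} = {√P, -√P} := by
    ext s
    rw [mem_ofPred_eq, ← Real.sq_sqrt hP.le, sq_eq_sq_iff_eq_or_eq_neg, Real.sq_sqrt hP.le]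
    rfl
  rw [hroots, encard_pair]
  have := Real.sqrt_pos.mpr hP
  linarith

theorem commonTangents_eq_image (x₁ x₂ : Pl) (r₁ r₂ : ℝ) :
    CommonTangents x₁ r₁ x₂ r₂ =
      (fun u => (u, ⟪u, x₁⟫ - r₁)) '' {u | ‖u‖ = 1 ∧ ⟪u, x₁ - x₂⟫ = r₁ - r₂} := by
  ext ⟨u, t⟩
  simp only [CommonTangents, mem_ofPred_eq, mem_image, Prod.mk.injEq, inner_sub_right]
  constructor
  · rintro ⟨hu, h₁, h₂⟩
    exact ⟨u, ⟨hu, by linarith⟩, rfl, by linarith⟩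
  · rintro ⟨u, ⟨hu, h⟩, rfl, rfl⟩
    exact ⟨hu, by ring, by linarith⟩

theorem encard_commonTangents (x₁ x₂ : Pl) (r₁ r₂ : ℝ) :
    (CommonTangents x₁ r₁ x₂ r₂).encard =
      {u : Pl | ‖u‖ = 1 ∧ ⟪u, x₁ - x₂⟫ = r₁ - r₂}.encard := by
  rw [commonTangents_eq_image, InjOn.encard_image]
  exact fun u _ v _ h => congrArg Prod.fst h

/-- Two distinct oriented circles have exactly 2 common oriented tangent lines when
`P(c₁, c₂) > 0`, exactly 1 when `P(c₁, c₂) = 0`, and none when `P(c₁, c₂) < 0`. -/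
theorem commonTangents_card (x₁ x₂ : Pl) (r₁ r₂ : ℝ) (h : (x₁, r₁) ≠ (x₂, r₂)) :
    (0 < ‖x₁ - x₂‖ ^ 2 - (r₁ - r₂) ^ 2 → (CommonTangents x₁ r₁ x₂ r₂).encard = 2) ∧
    (‖x₁ - x₂‖ ^ 2 - (r₁ - r₂) ^ 2 = 0 → (CommonTangents x₁ r₁ x₂ r₂).encard = 1) ∧
    (‖x₁ - x₂‖ ^ 2 - (r₁ - r₂) ^ 2 < 0 → CommonTangents x₁ r₁ x₂ r₂ = ∅) := by
  have hd : 0 ≤ ‖x₁ - x₂‖ ^ 2 - (r₁ - r₂) ^ 2 → x₁ - x₂ ≠ 0 := by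
    intro hP hx
    rw [hx, norm_zero] at hP
    have hr : r₁ - r₂ = 0 := by nlinarith
    exact h (Prod.ext (sub_eq_zero.mp hx) (sub_eq_zero.mp hr))
  refine ⟨fun hP => ?_, fun hP => ?_, fun hP => ?_⟩
  · rw [encard_commonTangents, encard_unit_inner_eq (hd hP.le),
      Real.encard_setOf_sq_eq_of_pos hP]
  · rw [encard_commonTangents, encard_unit_inner_eq (hd hP.ge), hP]
    simp
  · rw [commonTangents_eq_image, image_eq_empty, eq_empty_iff_forall_notMem]
    rintro u ⟨hu, hρ⟩
    linarith [sq_le_norm_sq_of_norm_eq_one_of_inner_eq hu hρ]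
end
end

section
/- Let c₁ = (x₁, r₁), c₂ = (x₂, r₂), c₃ = (x₃, r₃) be pairwise distinct oriented circles satisfying Q(cᵢ − cⱼ) = 0 for all i ≠ j (each pair is orientedly tangent). Then there exists a single point p ∈ ℝ² lying on all three underlying circles: dist p xᵢ = |rᵢ| for i = 1, 2, 3. -/
/-!
View oriented circles as vectors of the Lorentz space `ℝ² × ℝ` with the form `Q`; a point `p` lies
on `c` iff the point circle `(p, 0)` is tangent to `c`. Since `d = c₂ - c₁` is null,
`t ↦ Q (c₁ + t d - cᵢ)` is affine, and it vanishes at `t = 0` and `t = 1`; so every circle on the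
line `c₁ + t d` is tangent to `c₁`, `c₂` and `c₃`. As `c₁ ≠ c₂` forces `r₁ ≠ r₂`, the line contains
a point circle, which gives the common point. It is the only one: a point circle tangent to `c₁` and
`c₂` differs from `c₁` by a null vector Lorentz-orthogonal to `d`, hence by a multiple of `d`.
-/

open RealInnerProductSpace

noncomputable section

/-- The Lorentz quadratic form `Q(x, r) = ‖x‖² − r²` on the space of oriented circles;
two oriented circles `c`, `c'` are orientedly tangent exactly when `Q(c − c') = 0`. -/
def Q (c : Pl × ℝ) : ℝ := ‖c.1‖ ^ 2 - c.2 ^ 2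

def lorentzInner (u v : Pl × ℝ) : ℝ := ⟪u.1, v.1⟫ - u.2 * v.2

lemma Q_smul_add_smul (a b : ℝ) (u v : Pl × ℝ) :
    Q (a • u + b • v) = a ^ 2 * Q u + 2 * a * b * lorentzInner u v + b ^ 2 * Q v := by
  simp only [Q, lorentzInner, Prod.fst_add, Prod.snd_add, Prod.smul_fst, Prod.smul_snd,
    smul_eq_mul, ← real_inner_self_eq_norm_sq, inner_add_left, inner_add_right,
    real_inner_smul_left, real_inner_smul_right, real_inner_comm u.1 v.1]
  ring

lemma Q_sub_rev (u v : Pl × ℝ) : Q (u - v) = Q (v - u) := by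
  rw [← neg_sub, Q, Q, Prod.fst_neg, Prod.snd_neg, norm_neg, neg_sq]

lemma Q_sub_self (u : Pl × ℝ) : Q (u - u) = 0 := by
  simp [Q]

lemma lorentzInner_eq_zero_of_Q_eq_zero {u v : Pl × ℝ} (hu : Q u = 0) (hv : Q v = 0)
    (huv : Q (u + v) = 0) : lorentzInner u v = 0 := by
  have h := Q_smul_add_smul 1 1 u v
  rw [one_smul, one_smul, huv, hu, hv] at h
  linarith

lemma eq_zero_of_Q_eq_zero_of_snd_eq_zero {v : Pl × ℝ} (hQ : Q v = 0) (h : v.2 = 0) : v = 0 := by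
  rw [Q, h, sq_eq_zero_iff.mpr rfl, sub_zero, sq_eq_zero_iff, norm_eq_zero] at hQ
  exact Prod.ext hQ h

lemma snd_ne_of_Q_sub_eq_zero {c c' : Pl × ℝ} (hne : c ≠ c') (hQ : Q (c - c') = 0) :
    c.2 ≠ c'.2 := fun h =>
  hne <| sub_eq_zero.mp <|
    eq_zero_of_Q_eq_zero_of_snd_eq_zero hQ (by rw [Prod.snd_sub, h, sub_self])

/-- Here the Lorentzian signature enters: `v.2 • u - u.2 • v` is a null vector of radius `0`. -/
lemma smul_eq_smul_of_lorentzInner_eq_zero {u v : Pl × ℝ} (hu : Q u = 0) (hv : Q v = 0)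
    (huv : lorentzInner u v = 0) : v.2 • u = u.2 • v := by
  refine sub_eq_zero.mp (eq_zero_of_Q_eq_zero_of_snd_eq_zero ?_ ?_)
  · rw [sub_eq_add_neg, ← neg_smul, Q_smul_add_smul, hu, hv, huv]
    ring
  · simp only [Prod.snd_sub, Prod.smul_snd, smul_eq_mul]
    ring

lemma Q_add_smul_sub_eq_zero {a b e : Pl × ℝ} (hae : Q (a - e) = 0) (hbe : Q (b - e) = 0)
    (hab : Q (a - b) = 0) (t : ℝ) : Q (a + t • (b - a) - e) = 0 := by
  have hba : Q (b - a) = 0 := by rwa [Q_sub_rev]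
  have horth : lorentzInner (a - e) (b - a) = 0 :=
    lorentzInner_eq_zero_of_Q_eq_zero hae hba (by rwa [sub_add_sub_cancel'])
  rw [add_sub_right_comm, ← one_smul ℝ (a - e), Q_smul_add_smul, hae, hba, horth]
  ring

lemma eq_of_Q_sub_eq_zero_of_snd_eq {c c' P P' : Pl × ℝ} (hcc' : Q (c - c') = 0)
    (hr : c.2 ≠ c'.2) (hPc : Q (P - c) = 0) (hPc' : Q (P - c') = 0) (hP'c : Q (P' - c) = 0)
    (hP'c' : Q (P' - c') = 0) (hsnd : P.2 = P'.2) : P = P' := by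
  have key : ∀ {X : Pl × ℝ}, Q (X - c) = 0 → Q (X - c') = 0 →
      (c - c').2 • (X - c) = (X - c).2 • (c - c') := fun hXc hXc' =>
    smul_eq_smul_of_lorentzInner_eq_zero hXc hcc'
      (lorentzInner_eq_zero_of_Q_eq_zero hXc hcc' (by rwa [sub_add_sub_cancel]))
  have hne : (c - c').2 ≠ 0 := sub_ne_zero.mpr hr
  have h : (c - c').2 • (P - c) = (c - c').2 • (P' - c) := by
    rw [key hPc hPc', key hP'c hP'c', Prod.snd_sub, Prod.snd_sub, hsnd]
  exact sub_left_injective (smul_right_injective _ hne h)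

def tangencyPoint (c c' : Pl × ℝ) : Pl × ℝ := c + (c.2 / (c.2 - c'.2)) • (c' - c)

lemma tangencyPoint_snd {c c' : Pl × ℝ} (hr : c.2 ≠ c'.2) : (tangencyPoint c c').2 = 0 := by
  have : c.2 - c'.2 ≠ 0 := sub_ne_zero.mpr hr
  simp only [tangencyPoint, Prod.snd_add, Prod.smul_snd, Prod.snd_sub, smul_eq_mul]
  field_simp
  ring

lemma dist_eq_abs_iff_Q_eq_zero (p : Pl) (c : Pl × ℝ) :
    dist p c.1 = |c.2| ↔ Q ((p, 0) - c) = 0 := by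
  rw [Q, Prod.fst_sub, Prod.snd_sub, zero_sub, neg_sq, sub_eq_zero, ← dist_eq_norm,
    sq_eq_sq_iff_abs_eq_abs, abs_dist]

theorem pairwise_tangent_common_point_general (c₁ c₂ c₃ : Pl × ℝ)
    (h₁₂ : c₁ ≠ c₂)
    (t₁₂ : Q (c₁ - c₂) = 0) (t₁₃ : Q (c₁ - c₃) = 0) (t₂₃ : Q (c₂ - c₃) = 0) :
    ∃! p : Pl, dist p c₁.1 = |c₁.2| ∧ dist p c₂.1 = |c₂.2| ∧ dist p c₃.1 = |c₃.2| := by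
  have hr := snd_ne_of_Q_sub_eq_zero h₁₂ t₁₂
  have t₂₁ : Q (c₂ - c₁) = 0 := by rwa [Q_sub_rev]
  have hT₁ : Q (tangencyPoint c₁ c₂ - c₁) = 0 :=
    Q_add_smul_sub_eq_zero (Q_sub_self c₁) t₂₁ t₁₂ _
  have hT₂ : Q (tangencyPoint c₁ c₂ - c₂) = 0 :=
    Q_add_smul_sub_eq_zero t₁₂ (Q_sub_self c₂) t₁₂ _
  have hT₃ : Q (tangencyPoint c₁ c₂ - c₃) = 0 := Q_add_smul_sub_eq_zero t₁₃ t₂₃ t₁₂ _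
  have hT_snd := tangencyPoint_snd hr
  have hT : ((tangencyPoint c₁ c₂).1, (0 : ℝ)) = tangencyPoint c₁ c₂ := Prod.ext rfl hT_snd.symm
  simp only [dist_eq_abs_iff_Q_eq_zero]
  refine ⟨(tangencyPoint c₁ c₂).1, by beta_reduce; rw [hT]; exact ⟨hT₁, hT₂, hT₃⟩, ?_⟩
  rintro p ⟨hp₁, hp₂, -⟩
  exact congrArg Prod.fst (eq_of_Q_sub_eq_zero_of_snd_eq t₁₂ hr hp₁ hp₂ hT₁ hT₂ hT_snd.symm)

/-- If three pairwise distinct oriented circles are pairwise orientedly tangent,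
then there is a single point lying on all three underlying circles. -/
theorem pairwise_tangent_common_point (c₁ c₂ c₃ : Pl × ℝ)
    (h₁₂ : c₁ ≠ c₂) (h₁₃ : c₁ ≠ c₃) (h₂₃ : c₂ ≠ c₃)
    (t₁₂ : Q (c₁ - c₂) = 0) (t₁₃ : Q (c₁ - c₃) = 0) (t₂₃ : Q (c₂ - c₃) = 0) :
    ∃! p : Pl, dist p c₁.1 = |c₁.2| ∧ dist p c₂.1 = |c₂.2| ∧ dist p c₃.1 = |c₃.2| :=
  pairwise_tangent_common_point_general c₁ c₂ c₃ h₁₂ t₁₂ t₁₃ t₂₃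
end
end

section
/- Let C₁ = K(x₁, r₁), C₂ = K(x₂, r₂), C₃ = K(x₃, r₃) be circles with rᵢ > 0 such that C₂ strictly separates C₁ and C₃, namely ‖x₁ − x₂‖ + r₁ < r₂ (the closed disk of C₁ lies in the open disk of C₂) and ‖x₃ − x₂‖ > r₂ + r₃ (the closed disk of C₃ lies in the open exterior of C₂). Then the Apollonius problem for (C₁, C₂, C₃) has no solution: there is no circle tangent to all three, no line tangent to all three, and no point lying on all three. -/
open RealInnerProductSpace

noncomputable section

/-- The circle of center `x` and radius `r` in the Euclidean plane. -/
def K (x : Pl) (r : ℝ) : Set Pl := {p | dist p x = r}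

/-- Two circles, given by centers and (positive) radii, are tangent. -/
def CircleTangent (y : Pl) (s : ℝ) (x : Pl) (r : ℝ) : Prop :=
  dist y x = s + r ∨ dist y x = |s - r|

/-- A line (a 1-dimensional affine subspace of the plane) is tangent to a circle iff it
meets it in exactly one point. -/
def LineTangent (L : AffineSubspace ℝ Pl) (x : Pl) (r : ℝ) : Prop :=
  ∃! p, p ∈ (L : Set Pl) ∩ K x r

/-- Solutions of the Apollonius problem for three circles with centers `x i` and radii
`r i`: a solution is either a circle `(y, s)` with `s > 0` tangent to all three, or a
line (1-dimensional affine subspace) tangent to all three, or a point lying on all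
three. The solution set is the disjoint union (sum type) of these three sets. -/
def ApolloniusSolutions (x : Fin 3 → Pl) (r : Fin 3 → ℝ) : Type :=
  {ys : Pl × ℝ // 0 < ys.2 ∧ ∀ i, CircleTangent ys.1 ys.2 (x i) (r i)} ⊕
  {L : AffineSubspace ℝ Pl // Module.finrank ℝ L.direction = 1 ∧
    ∀ i, LineTangent L (x i) (r i)} ⊕
  {p : Pl // ∀ i, p ∈ K (x i) (r i)}

/-! Every point of `C₁` lies in the open disk of `C₂`, and every point of `C₃` in the open
exterior of `C₂`. A line or a point meeting `C₁` therefore meets the open disk of `C₂`,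
which a point of `C₂` or a line tangent to `C₂` cannot do. For circles the same picture is
read off the distances of the centers: a circle `(y, s)` tangent to `C₁` and to `C₃`
satisfies `|s - r₂| < ‖y - x₂‖ < s + r₂`, so it crosses `C₂` instead of touching it. -/

theorem dist_lt_of_mem_K {x₁ x₂ p : Pl} {r₁ r₂ : ℝ} (hp : p ∈ K x₁ r₁)
    (hsep : dist x₁ x₂ + r₁ < r₂) : dist p x₂ < r₂ := by
  have hp : dist p x₁ = r₁ := hp
  linarith [dist_triangle p x₁ x₂]

namespace CircleTangent

variable {y x : Pl} {s r : ℝ}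

theorem sub_le_dist (h : CircleTangent y s x r) (hr : 0 ≤ r) : s - r ≤ dist y x := by
  rcases h with h | h <;> rw [h]
  · linarith
  · exact le_abs_self _

theorem dist_le_add (h : CircleTangent y s x r) (hs : 0 ≤ s) (hr : 0 ≤ r) :
    dist y x ≤ s + r := by
  rcases h with h | h <;> rw [h]
  exact abs_sub_le_iff.2 ⟨by linarith, by linarith⟩

end CircleTangent

theorem not_circleTangent_of_separates {y x₁ x₂ x₃ : Pl} {s r₁ r₂ r₃ : ℝ}
    (hs : 0 ≤ s) (hr₁ : 0 ≤ r₁) (hr₃ : 0 ≤ r₃)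
    (hsep₁ : dist x₁ x₂ + r₁ < r₂) (hsep₃ : r₂ + r₃ < dist x₃ x₂)
    (ht₁ : CircleTangent y s x₁ r₁) (ht₃ : CircleTangent y s x₃ r₃) :
    ¬ CircleTangent y s x₂ r₂ := by
  have hlt_add₁ : dist y x₂ < s + r₂ := by
    linarith [dist_triangle y x₁ x₂, ht₁.dist_le_add hs hr₁]
  have hsub_lt₁ : s - r₂ < dist y x₂ := by
    linarith [dist_triangle y x₂ x₁, dist_comm x₁ x₂, ht₁.sub_le_dist hr₁]
  have hsub_lt₃ : r₂ - s < dist y x₂ := by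
    linarith [dist_triangle x₃ y x₂, dist_comm x₃ y, ht₃.dist_le_add hs hr₃]
  rintro (h | h)
  · exact hlt_add₁.ne h
  · exact (abs_sub_lt_iff.2 ⟨hsub_lt₁, hsub_lt₃⟩).ne' h

theorem le_dist_of_existsUnique_mem_inter_sphere {V P : Type*} [NormedAddCommGroup V]
    [InnerProductSpace ℝ V] [MetricSpace P] [NormedAddTorsor V P] {L : AffineSubspace ℝ P}
    {c p : P} {r : ℝ} (h : ∃! q, q ∈ (L : Set P) ∩ Metric.sphere c r) (hp : p ∈ L) :
    r ≤ dist p c := by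
  by_contra! hlt
  obtain ⟨p₀, ⟨hp₀L, hp₀S⟩, huniq⟩ := h
  let S : EuclideanGeometry.Sphere P := ⟨c, r⟩
  -- the chord from `p₀` through the interior point `p` ends at a second point of the sphere
  set q := S.secondInter p₀ (p -ᵥ p₀)
  have hq : Sbtw ℝ p₀ p q := S.sbtw_secondInter hp₀S hlt
  have hqL : q ∈ L := AffineSubspace.smul_vsub_vadd_mem L _ hp hp₀L hp₀L
  have hqS : q ∈ Metric.sphere c r := (S.secondInter_mem _).2 hp₀S
  exact hq.left_ne_right (huniq q ⟨hqL, hqS⟩).symm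

theorem apollonius_separating_no_solution_general (x₁ x₂ x₃ : Pl) (r₁ r₂ r₃ : ℝ)
    (h₁ : 0 < r₁) (h₃ : 0 < r₃)
    (hsep₁ : ‖x₁ - x₂‖ + r₁ < r₂) (hsep₃ : ‖x₃ - x₂‖ > r₂ + r₃) :
    IsEmpty (ApolloniusSolutions ![x₁, x₂, x₃] ![r₁, r₂, r₃]) := by
  rw [← dist_eq_norm] at hsep₁ hsep₃
  refine ⟨?_⟩
  rintro (⟨⟨y, s⟩, hs, ht⟩ | ⟨L, -, ht⟩ | ⟨p, hp⟩)
  · exact not_circleTangent_of_separates hs.le h₁.le h₃.le hsep₁ hsep₃ (ht 0) (ht 2) (ht 1)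
  · obtain ⟨a, ⟨haL, ha⟩, -⟩ := ht 0
    exact (dist_lt_of_mem_K ha hsep₁).not_ge
      (le_dist_of_existsUnique_mem_inter_sphere (ht 1) haL)
  · exact (dist_lt_of_mem_K (hp 0) hsep₁).ne (hp 1)

/-- If `C₂` strictly separates `C₁` and `C₃` (the closed disk of `C₁` lies in the open
disk of `C₂`, and the closed disk of `C₃` lies in the open exterior of `C₂`), then the
Apollonius problem has no solution: no circle, no line and no point is a solution. -/
theorem apollonius_separating_no_solution (x₁ x₂ x₃ : Pl) (r₁ r₂ r₃ : ℝ)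
    (h₁ : 0 < r₁) (h₂ : 0 < r₂) (h₃ : 0 < r₃)
    (hsep₁ : ‖x₁ - x₂‖ + r₁ < r₂) (hsep₃ : ‖x₃ - x₂‖ > r₂ + r₃) :
    IsEmpty (ApolloniusSolutions ![x₁, x₂, x₃] ![r₁, r₂, r₃]) :=
  apollonius_separating_no_solution_general x₁ x₂ x₃ r₁ r₂ r₃ h₁ h₃ hsep₁ hsep₃
end
end

section
/- Let C₁ = K(x₁, r₁), C₂ = K(x₂, r₂), C₃ = K(x₃, r₃) be circles with rᵢ > 0 such that C₁ strictly surrounds both C₂ and C₃, which are externally disjoint from each other: ‖x₂ − x₁‖ + r₂ < r₁, ‖x₃ − x₁‖ + r₃ < r₁, and ‖x₂ − x₃‖ > r₂ + r₃. Then the Apollonius problem for (C₁, C₂, C₃) has exactly 8 solutions. -/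
/-!
Every point of `C₂` lies strictly inside `C₁`: hence no point is on all three circles, and a line
meeting `C₂` meets `C₁` twice, so no line is a solution. A solution circle `(y, s)` touches `C₁`
from inside, `dist y x₁ = r₁ - s`, and each of `C₂`, `C₃` from outside or inside,
`dist y xᵢ = s ± rᵢ`. Eliminating `s`, the centre `y` lies on one of four pairs of ellipses
`dist y x₁ + dist y x₂ = a`, `dist y x₁ + dist y x₃ = b` with `a = r₁ ± r₂`, `b = r₁ ± r₃` and
common focus `x₁`. About that focus the first ellipse has the polar equation
`y = x₁ + ρ • u`, `ρ = A / (2 (a + ⟪x₁ - x₂, u⟫))`, `A = a² - ‖x₁ - x₂‖²` (similarly `B` for the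
second), so the common points of the pair correspond to the unit vectors `u` on the line
`⟪w, u⟫ = c`, `w = A • (x₁ - x₃) - B • (x₁ - x₂)`, `c = a B - b A`. Since
`‖w‖² - c² = A B (‖x₂ - x₃‖² - (a - b)²) > 0`, this line cuts the unit circle in exactly two
points, which gives `4 · 2 = 8` solutions.
-/

open RealInnerProductSpace

noncomputable section

open Module

theorem Set.ncard_union_inter_union {α : Type*} {E₁ E₂ F₁ F₂ : Set α} (hE : Disjoint E₁ E₂)
    (hF : Disjoint F₁ F₂) (h₁₁ : (E₁ ∩ F₁).Finite) (h₁₂ : (E₁ ∩ F₂).Finite)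
    (h₂₁ : (E₂ ∩ F₁).Finite) (h₂₂ : (E₂ ∩ F₂).Finite) :
    ((E₁ ∪ E₂) ∩ (F₁ ∪ F₂)).ncard =
      (E₁ ∩ F₁).ncard + (E₁ ∩ F₂).ncard + ((E₂ ∩ F₁).ncard + (E₂ ∩ F₂).ncard) := by
  have hF' (E : Set α) : Disjoint (E ∩ F₁) (E ∩ F₂) :=
    hF.mono Set.inter_subset_right Set.inter_subset_right
  rw [Set.union_inter_distrib_right, Set.ncard_union_eq
      (hE.mono Set.inter_subset_left Set.inter_subset_left)
      (by rw [Set.inter_union_distrib_left]; exact h₁₁.union h₁₂)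
      (by rw [Set.inter_union_distrib_left]; exact h₂₁.union h₂₂),
    Set.inter_union_distrib_left, Set.inter_union_distrib_left, Set.ncard_union_eq (hF' _) h₁₁ h₁₂,
    Set.ncard_union_eq (hF' _) h₂₁ h₂₂]

def ellipse {P : Type*} [PseudoMetricSpace P] (f₁ f₂ : P) (a : ℝ) : Set P :=
  {y | dist y f₁ + dist y f₂ = a}

theorem disjoint_ellipse {P : Type*} [PseudoMetricSpace P] {f₁ f₂ : P} {a b : ℝ} (h : a ≠ b) :
    Disjoint (ellipse f₁ f₂ a) (ellipse f₁ f₂ b) :=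
  Set.disjoint_left.2 fun _ ha hb => h (ha.symm.trans hb)

section InnerProductSpace

variable {V : Type*} [NormedAddCommGroup V] [InnerProductSpace ℝ V]

theorem ncard_setOf_dist_add_smul_eq {p v x : V} {r : ℝ} (hv : v ≠ 0) (hp : dist p x < r) :
    {t : ℝ | dist (p + t • v) x = r}.ncard = 2 := by
  have hr : 0 ≤ r := dist_nonneg.trans hp.le
  set q := p - x
  have hq : ‖q‖ < r := by rwa [← dist_eq_norm]
  have hv2 : 0 < ‖v‖ ^ 2 := by positivity
  have hdisc : 0 < discrim (‖v‖ ^ 2) (2 * ⟪q, v⟫) (‖q‖ ^ 2 - r ^ 2) := by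
    have : ‖q‖ ^ 2 < r ^ 2 := pow_lt_pow_left₀ hq (norm_nonneg q) two_ne_zero
    rw [discrim]
    nlinarith [sq_nonneg ⟪q, v⟫, mul_pos hv2 (sub_pos.2 this)]
  set s := √(discrim (‖v‖ ^ 2) (2 * ⟪q, v⟫) (‖q‖ ^ 2 - r ^ 2))
  have hs : 0 < s := Real.sqrt_pos.2 hdisc
  have hroots : {t : ℝ | dist (p + t • v) x = r} =
      {(-(2 * ⟪q, v⟫) + s) / (2 * ‖v‖ ^ 2), (-(2 * ⟪q, v⟫) - s) / (2 * ‖v‖ ^ 2)} := by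
    ext t
    rw [Set.mem_ofPred_eq, Set.mem_insert_iff, Set.mem_singleton_iff,
      ← quadratic_eq_zero_iff hv2.ne' (Real.mul_self_sqrt hdisc.le).symm,
      dist_eq_norm, add_sub_right_comm, ← sq_eq_sq₀ (norm_nonneg _) hr,
      norm_add_sq_real, inner_smul_right, norm_smul, Real.norm_eq_abs, mul_pow, sq_abs]
    constructor <;> intro h <;> linear_combination h
  rw [hroots, Set.ncard_pair]
  intro h
  field_simp at h
  linarith

def ellipseFocalRadius (f₁ f₂ : V) (a : ℝ) (u : V) : ℝ :=
  (a ^ 2 - ‖f₁ - f₂‖ ^ 2) / (2 * (a + ⟪f₁ - f₂, u⟫))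

variable {f₁ f₂ u : V} {a t : ℝ}

theorem neg_dist_le_inner_of_norm_eq_one (hu : ‖u‖ = 1) : -dist f₁ f₂ ≤ ⟪f₁ - f₂, u⟫ := by
  have := abs_real_inner_le_norm (f₁ - f₂) u
  rw [hu, mul_one, ← dist_eq_norm] at this
  exact (abs_le.1 this).1

theorem add_inner_sub_pos (hu : ‖u‖ = 1) (ha : dist f₁ f₂ < a) : 0 < a + ⟪f₁ - f₂, u⟫ := by
  linarith [neg_dist_le_inner_of_norm_eq_one (f₁ := f₁) (f₂ := f₂) hu]

theorem ellipseFocalRadius_pos (hu : ‖u‖ = 1) (ha : dist f₁ f₂ < a) :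
    0 < ellipseFocalRadius f₁ f₂ a u := by
  have : dist f₁ f₂ ^ 2 < a ^ 2 := pow_lt_pow_left₀ ha dist_nonneg two_ne_zero
  rw [dist_eq_norm] at this
  exact div_pos (by linarith) (by linarith [add_inner_sub_pos hu ha])

theorem add_smul_mem_ellipse_iff (hu : ‖u‖ = 1) (ht : 0 ≤ t) (ha : dist f₁ f₂ < a) :
    f₁ + t • u ∈ ellipse f₁ f₂ a ↔ t = ellipseFocalRadius f₁ f₂ a u := by
  have hi := neg_dist_le_inner_of_norm_eq_one (f₁ := f₁) (f₂ := f₂) hu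
  have hpos := add_inner_sub_pos hu ha
  rw [dist_eq_norm] at hi ha
  have hsq : ‖t • u + (f₁ - f₂)‖ ^ 2 = (a - t) ^ 2 ↔ t = ellipseFocalRadius f₁ f₂ a u := by
    rw [ellipseFocalRadius, eq_div_iff (by positivity), norm_add_sq_real, real_inner_smul_left,
      norm_smul, Real.norm_eq_abs, abs_of_nonneg ht, hu, real_inner_comm]
    constructor <;> intro h <;> linear_combination h
  rw [ellipse, Set.mem_ofPred_eq, dist_self_add_left, norm_smul, Real.norm_eq_abs,
    abs_of_nonneg ht, hu, mul_one, dist_eq_norm, add_comm f₁, add_sub_assoc, ← hsq]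
  constructor
  · intro h
    rw [← h, add_sub_cancel_left]
  · intro h
    have hta : 2 * t * (a + ⟪f₁ - f₂, u⟫) = a ^ 2 - ‖f₁ - f₂‖ ^ 2 := by
      rw [hsq.1 h, ellipseFocalRadius]
      field_simp
    have hat : 0 ≤ a - t := by
      have : 0 ≤ a * (⟪f₁ - f₂, u⟫ + ‖f₁ - f₂‖) :=
        mul_nonneg ((norm_nonneg _).trans ha.le) (by linarith)
      nlinarith [sq_nonneg (a - ‖f₁ - f₂‖)]
    rw [(sq_eq_sq₀ (norm_nonneg _) hat).1 h]
    ring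

theorem ellipseFocalRadius_eq_iff {x₁ x₂ x₃ : V} {b : ℝ} (hu : ‖u‖ = 1)
    (h₂ : dist x₁ x₂ < a) (h₃ : dist x₁ x₃ < b) :
    ellipseFocalRadius x₁ x₂ a u = ellipseFocalRadius x₁ x₃ b u ↔
      ⟪(a ^ 2 - ‖x₁ - x₂‖ ^ 2) • (x₁ - x₃) - (b ^ 2 - ‖x₁ - x₃‖ ^ 2) • (x₁ - x₂), u⟫ =
        a * (b ^ 2 - ‖x₁ - x₃‖ ^ 2) - b * (a ^ 2 - ‖x₁ - x₂‖ ^ 2) := by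
  have := add_inner_sub_pos hu h₂
  have := add_inner_sub_pos hu h₃
  rw [ellipseFocalRadius, ellipseFocalRadius, div_eq_div_iff (by positivity) (by positivity),
    inner_sub_left (_ • _), real_inner_smul_left, real_inner_smul_left]
  constructor
  · intro h
    linear_combination h / 2
  · intro h
    linear_combination 2 * h

theorem injOn_add_smul_self_of_pos {x : V} {ρ : V → ℝ} (hρ : ∀ u, ‖u‖ = 1 → 0 < ρ u) :
    Set.InjOn (fun u => x + ρ u • u) {u | ‖u‖ = 1} := by
  intro u (hu : ‖u‖ = 1) u' (hu' : ‖u'‖ = 1) h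
  replace h : ρ u • u = ρ u' • u' := add_left_cancel h
  have hρ' : ρ u = ρ u' := by
    simpa [norm_smul, hu, hu', abs_of_pos (hρ u hu), abs_of_pos (hρ u' hu')] using
      congrArg norm h
  rw [hρ'] at h
  exact smul_right_injective V (hρ u' hu').ne' h

theorem ellipse_inter_ellipse_eq_image {x₁ x₂ x₃ : V} {a b : ℝ} (h₂ : dist x₁ x₂ < a)
    (h₃ : dist x₁ x₃ < b) :
    ellipse x₁ x₂ a ∩ ellipse x₁ x₃ b =
      (fun u => x₁ + ellipseFocalRadius x₁ x₂ a u • u) ''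
        {u | ‖u‖ = 1 ∧ ellipseFocalRadius x₁ x₂ a u = ellipseFocalRadius x₁ x₃ b u} := by
  ext y
  constructor
  · rintro ⟨hy₂, hy₃⟩
    have hy : y - x₁ ≠ 0 := by
      rintro h
      rw [sub_eq_zero.1 h, ellipse, Set.mem_ofPred_eq, dist_self, zero_add] at hy₂
      exact h₂.ne hy₂
    set t := ‖y - x₁‖
    set u := t⁻¹ • (y - x₁)
    have hu : ‖u‖ = 1 := norm_smul_inv_norm hy
    have hyu : y = x₁ + t • u := by
      rw [smul_inv_smul₀ (norm_ne_zero_iff.2 hy), add_sub_cancel]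
    rw [hyu, add_smul_mem_ellipse_iff hu (norm_nonneg _) h₂] at hy₂
    rw [hyu, add_smul_mem_ellipse_iff hu (norm_nonneg _) h₃] at hy₃
    exact ⟨u, ⟨hu, hy₂ ▸ hy₃⟩, by simp only [← hy₂]; exact hyu.symm⟩
  · rintro ⟨u, ⟨hu, heq⟩, rfl⟩
    have ht := (ellipseFocalRadius_pos hu h₂).le
    exact ⟨(add_smul_mem_ellipse_iff hu ht h₂).2 rfl, (add_smul_mem_ellipse_iff hu ht h₃).2 heq⟩

end InnerProductSpace

section Plane

variable {V : Type*} [NormedAddCommGroup V] [InnerProductSpace ℝ V] [Fact (finrank ℝ V = 2)]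

theorem exists_ne_zero_forall_inner_eq_zero_iff {w : V} (hw : w ≠ 0) :
    ∃ v ≠ 0, ∀ u, ⟪w, u⟫ = 0 ↔ ∃ t : ℝ, t • v = u := by
  have hK : finrank ℝ (ℝ ∙ w)ᗮ = 1 := Submodule.finrank_orthogonal_span_singleton hw
  obtain ⟨⟨v, hvK⟩, hv, -⟩ := finrank_eq_one_iff'.1 hK
  replace hv : v ≠ 0 := fun h => hv (Subtype.ext h)
  rw [Submodule.mem_orthogonal_singleton_iff_inner_right] at hvK
  refine ⟨v, hv, fun u => ⟨fun hu => ?_, ?_⟩⟩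
  · exact Submodule.mem_span_singleton.1
      (Submodule.mem_span_singleton_of_inner_eq_zero_of_inner_eq_zero hw hv hu hvK)
  · rintro ⟨t, rfl⟩
    rw [inner_smul_right, hvK, mul_zero]

theorem ncard_setOf_norm_eq_one_and_inner_eq {w : V} {c : ℝ} (hc : |c| < ‖w‖) :
    {u : V | ‖u‖ = 1 ∧ ⟪w, u⟫ = c}.ncard = 2 := by
  have hw : w ≠ 0 := norm_pos_iff.1 ((abs_nonneg c).trans_lt hc)
  have hw' : ‖w‖ ≠ 0 := norm_ne_zero_iff.2 hw
  obtain ⟨v, hv, hperp⟩ := exists_ne_zero_forall_inner_eq_zero_iff hw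
  set p := (c / ‖w‖ ^ 2) • w
  have hwp : ⟪w, p⟫ = c := by
    rw [inner_smul_right, real_inner_self_eq_norm_sq]
    field_simp
  have hp : dist p 0 < 1 := by
    have : ‖p‖ = |c| / ‖w‖ := by
      rw [norm_smul, norm_div, norm_pow, norm_norm, Real.norm_eq_abs]
      field_simp
    rwa [dist_zero_right, this, div_lt_one (norm_pos_iff.2 hw)]
  have hline : {u : V | ‖u‖ = 1 ∧ ⟪w, u⟫ = c} =
      (fun t : ℝ => p + t • v) '' {t | dist (p + t • v) 0 = 1} := by
    ext u
    simp only [Set.mem_ofPred_eq, Set.mem_image, dist_zero_right]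
    constructor
    · rintro ⟨hu, hwu⟩
      obtain ⟨t, ht⟩ := (hperp (u - p)).1 (by rw [inner_sub_right, hwu, hwp, sub_self])
      exact ⟨t, by rwa [ht, add_sub_cancel], by rw [ht, add_sub_cancel]⟩
    · rintro ⟨t, ht, rfl⟩
      refine ⟨ht, ?_⟩
      rw [inner_add_right, hwp, (hperp _).2 ⟨t, rfl⟩, add_zero]
  have hinj : Function.Injective fun t : ℝ => p + t • v :=
    (add_right_injective p).comp (smul_left_injective ℝ hv)
  rw [hline, Set.ncard_image_of_injective _ hinj]
  exact ncard_setOf_dist_add_smul_eq hv hp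

theorem ncard_ellipse_inter_ellipse {x₁ x₂ x₃ : V} {a b : ℝ} (h₂ : dist x₁ x₂ < a)
    (h₃ : dist x₁ x₃ < b) (h₂₃ : |a - b| < dist x₂ x₃) :
    (ellipse x₁ x₂ a ∩ ellipse x₁ x₃ b).ncard = 2 := by
  rw [ellipse_inter_ellipse_eq_image h₂ h₃,
    ((injOn_add_smul_self_of_pos fun u hu => ellipseFocalRadius_pos hu h₂).mono
      fun u hu => hu.1).ncard_image]
  rw [Set.ext fun u => and_congr_right fun hu => ellipseFocalRadius_eq_iff hu h₂ h₃]
  set A := a ^ 2 - ‖x₁ - x₂‖ ^ 2 with hA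
  set B := b ^ 2 - ‖x₁ - x₃‖ ^ 2 with hB
  have hApos : 0 < A := by
    rw [dist_eq_norm] at h₂
    nlinarith [norm_nonneg (x₁ - x₂)]
  have hBpos : 0 < B := by
    rw [dist_eq_norm] at h₃
    nlinarith [norm_nonneg (x₁ - x₃)]
  apply ncard_setOf_norm_eq_one_and_inner_eq
  refine abs_lt_of_sq_lt_sq ?_ (norm_nonneg _)
  have hd : x₂ - x₃ = (x₁ - x₃) - (x₁ - x₂) := by abel
  have hab : (a - b) ^ 2 < ‖(x₁ - x₃) - (x₁ - x₂)‖ ^ 2 := by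
    rw [← hd, ← dist_eq_norm, ← sq_abs]
    exact pow_lt_pow_left₀ h₂₃ (abs_nonneg _) two_ne_zero
  have key : ‖A • (x₁ - x₃) - B • (x₁ - x₂)‖ ^ 2 - (a * B - b * A) ^ 2 =
      A * B * (‖(x₁ - x₃) - (x₁ - x₂)‖ ^ 2 - (a - b) ^ 2) := by
    rw [norm_sub_sq_real, norm_sub_sq_real, norm_smul, norm_smul, real_inner_smul_left,
      real_inner_smul_right, Real.norm_eq_abs, Real.norm_eq_abs, hA, hB]
    simp only [mul_pow, sq_abs]
    ring
  nlinarith [mul_pos (mul_pos hApos hBpos) (sub_pos.2 hab)]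

theorem ncard_union_ellipse_inter_union_ellipse {x₁ x₂ x₃ : V} {r₁ r₂ r₃ : ℝ} (hr₂ : 0 < r₂)
    (hr₃ : 0 < r₃) (h₁₂ : dist x₂ x₁ + r₂ < r₁) (h₁₃ : dist x₃ x₁ + r₃ < r₁)
    (h₂₃ : r₂ + r₃ < dist x₂ x₃) :
    ((ellipse x₁ x₂ (r₁ + r₂) ∪ ellipse x₁ x₂ (r₁ - r₂)) ∩
      (ellipse x₁ x₃ (r₁ + r₃) ∪ ellipse x₁ x₃ (r₁ - r₃))).ncard = 8 := by
  rw [dist_comm] at h₁₂ h₁₃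
  have two : ∀ a ∈ ({r₁ + r₂, r₁ - r₂} : Set ℝ), ∀ b ∈ ({r₁ + r₃, r₁ - r₃} : Set ℝ),
      (ellipse x₁ x₂ a ∩ ellipse x₁ x₃ b).ncard = 2 := by
    rintro a (rfl | rfl : a = _ ∨ a = _) b (rfl | rfl : b = _ ∨ b = _) <;>
      exact ncard_ellipse_inter_ellipse (by linarith) (by linarith)
        (abs_lt.2 ⟨by linarith, by linarith⟩)
  have fin : ∀ a ∈ ({r₁ + r₂, r₁ - r₂} : Set ℝ), ∀ b ∈ ({r₁ + r₃, r₁ - r₃} : Set ℝ),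
      (ellipse x₁ x₂ a ∩ ellipse x₁ x₃ b).Finite := fun a ha b hb =>
    Set.finite_of_ncard_ne_zero (by rw [two a ha b hb]; norm_num)
  rw [Set.ncard_union_inter_union (disjoint_ellipse (by linarith)) (disjoint_ellipse (by linarith))
    (fin _ (by simp) _ (by simp)) (fin _ (by simp) _ (by simp)) (fin _ (by simp) _ (by simp))
    (fin _ (by simp) _ (by simp)), two _ (by simp) _ (by simp), two _ (by simp) _ (by simp),
    two _ (by simp) _ (by simp), two _ (by simp) _ (by simp)]

end Plane

theorem not_lineTangent_of_mem_of_dist_lt {L : AffineSubspace ℝ Pl}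
    (hL : finrank ℝ L.direction = 1) {p x : Pl} {r : ℝ} (hp : p ∈ L) (hpx : dist p x < r) :
    ¬ LineTangent L x r := by
  rintro ⟨q, -, huniq⟩
  obtain ⟨⟨v, hvL⟩, hv, -⟩ := finrank_eq_one_iff'.1 hL
  replace hv : v ≠ 0 := fun h => hv (Subtype.ext h)
  obtain ⟨t₁, t₂, hne, hroots⟩ := Set.ncard_eq_two.1 (ncard_setOf_dist_add_smul_eq hv hpx)
  have hmem : ∀ t ∈ ({t₁, t₂} : Set ℝ), p + t • v = q := by
    intro t ht
    rw [← hroots] at ht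
    refine huniq _ ⟨?_, ht⟩
    rw [add_comm]
    exact L.vadd_mem_of_mem_direction (L.direction.smul_mem t hvL) hp
  have := (hmem t₁ (by simp)).trans (hmem t₂ (by simp)).symm
  exact hne (smul_left_injective ℝ hv (add_left_cancel this))

theorem disjoint_K_of_dist_add_lt {x₁ x₂ : Pl} {r₁ r₂ : ℝ} (h : dist x₂ x₁ + r₂ < r₁) :
    Disjoint (K x₁ r₁) (K x₂ r₂) :=
  Set.disjoint_left.2 fun p (hp₁ : dist p x₁ = r₁) (hp₂ : dist p x₂ = r₂) => by
    linarith [dist_triangle p x₂ x₁]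

theorem circleTangent_and_circleTangent_iff_of_dist_add_lt {y x₁ x₂ : Pl} {s r₁ r₂ : ℝ}
    (hs : 0 ≤ s) (hr₂ : 0 ≤ r₂) (h : dist x₂ x₁ + r₂ < r₁) :
    CircleTangent y s x₁ r₁ ∧ CircleTangent y s x₂ r₂ ↔
      dist y x₁ = r₁ - s ∧ (dist y x₂ = s + r₂ ∨ dist y x₂ = s - r₂) := by
  have := dist_triangle y x₂ x₁
  have := dist_triangle_right y x₂ x₁
  unfold CircleTangent
  constructor
  · rintro ⟨h₁ | h₁, h₂ | h₂⟩ <;> cases abs_cases (s - r₁) <;> cases abs_cases (s - r₂) <;>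
      first
      | (exfalso; linarith)
      | exact ⟨by linarith, Or.inl (by linarith)⟩
      | exact ⟨by linarith, Or.inr (by linarith)⟩
  · have := dist_nonneg (x := y) (y := x₁)
    have := dist_nonneg (x := y) (y := x₂)
    rintro ⟨h₁, h₂ | h₂⟩
    · exact ⟨Or.inr (by rw [abs_of_nonpos (by linarith)]; linarith), Or.inl h₂⟩
    · exact ⟨Or.inr (by rw [abs_of_nonpos (by linarith)]; linarith),
        Or.inr (by rw [abs_of_nonneg (by linarith)]; linarith)⟩

theorem setOf_circleTangent_eq_image {x₁ x₂ x₃ : Pl} {r₁ r₂ r₃ : ℝ} (hr₂ : 0 ≤ r₂)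
    (hr₃ : 0 ≤ r₃) (h₁₂ : dist x₂ x₁ + r₂ < r₁) (h₁₃ : dist x₃ x₁ + r₃ < r₁)
    (h₂₃ : r₂ + r₃ < dist x₂ x₃) :
    {ys : Pl × ℝ | 0 < ys.2 ∧ ∀ i, CircleTangent ys.1 ys.2 (![x₁, x₂, x₃] i) (![r₁, r₂, r₃] i)} =
      (fun y => (y, r₁ - dist y x₁)) ''
        ((ellipse x₁ x₂ (r₁ + r₂) ∪ ellipse x₁ x₂ (r₁ - r₂)) ∩
          (ellipse x₁ x₃ (r₁ + r₃) ∪ ellipse x₁ x₃ (r₁ - r₃))) := by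
  ext ⟨y, s⟩
  simp only [Fin.forall_fin_succ, Matrix.cons_val_zero, Matrix.cons_val_succ, IsEmpty.forall_iff,
    and_true, Set.mem_ofPred_eq, Set.mem_image, Set.mem_inter_iff,
    Set.mem_union, ellipse, Prod.mk.injEq]
  constructor
  · rintro ⟨hs, T₁, T₂, T₃⟩
    obtain ⟨h₁, h₂⟩ := (circleTangent_and_circleTangent_iff_of_dist_add_lt hs.le hr₂ h₁₂).1 ⟨T₁, T₂⟩
    obtain ⟨-, h₃⟩ := (circleTangent_and_circleTangent_iff_of_dist_add_lt hs.le hr₃ h₁₃).1 ⟨T₁, T₃⟩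
    exact ⟨y, ⟨h₂.imp (fun _ => by linarith) (fun _ => by linarith),
      h₃.imp (fun _ => by linarith) (fun _ => by linarith)⟩, rfl, by linarith⟩
  · rintro ⟨y, ⟨h₂, h₃⟩, rfl, rfl⟩
    have h₂' : dist y x₂ = r₁ - dist y x₁ + r₂ ∨ dist y x₂ = r₁ - dist y x₁ - r₂ :=
      h₂.imp (fun _ => by linarith) (fun _ => by linarith)
    have h₃' : dist y x₃ = r₁ - dist y x₁ + r₃ ∨ dist y x₃ = r₁ - dist y x₁ - r₃ :=
      h₃.imp (fun _ => by linarith) (fun _ => by linarith)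
    have hs : 0 < r₁ - dist y x₁ := by
      have := dist_triangle_left x₂ x₃ y
      rcases h₂' with h₂' | h₂' <;> rcases h₃' with h₃' | h₃' <;> linarith
    obtain ⟨T₁, T₂⟩ := (circleTangent_and_circleTangent_iff_of_dist_add_lt hs.le hr₂ h₁₂).2 ⟨by ring, h₂'⟩
    obtain ⟨-, T₃⟩ := (circleTangent_and_circleTangent_iff_of_dist_add_lt hs.le hr₃ h₁₃).2 ⟨by ring, h₃'⟩
    exact ⟨hs, T₁, T₂, T₃⟩

theorem apollonius_surrounding_eight_solutions_general (x₁ x₂ x₃ : Pl) (r₁ r₂ r₃ : ℝ)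
    (h₂ : 0 < r₂) (h₃ : 0 < r₃)
    (h₁₂ : ‖x₂ - x₁‖ + r₂ < r₁) (h₁₃ : ‖x₃ - x₁‖ + r₃ < r₁)
    (h₂₃ : ‖x₂ - x₃‖ > r₂ + r₃) :
    Nat.card (ApolloniusSolutions ![x₁, x₂, x₃] ![r₁, r₂, r₃]) = 8 := by
  rw [← dist_eq_norm] at h₁₂ h₁₃ h₂₃
  have : Fact (finrank ℝ Pl = 2) := ⟨finrank_euclideanSpace_fin⟩
  have : IsEmpty {L : AffineSubspace ℝ Pl // finrank ℝ L.direction = 1 ∧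
      ∀ i, LineTangent L (![x₁, x₂, x₃] i) (![r₁, r₂, r₃] i)} := by
    refine ⟨fun ⟨L, hL, htan⟩ => ?_⟩
    obtain ⟨p, ⟨hpL, hp : dist p x₂ = r₂⟩, -⟩ := htan 1
    exact not_lineTangent_of_mem_of_dist_lt (x := x₁) (r := r₁) hL hpL
      (by linarith [dist_triangle p x₂ x₁]) (htan 0)
  have : IsEmpty {p : Pl // ∀ i, p ∈ K (![x₁, x₂, x₃] i) (![r₁, r₂, r₃] i)} :=
    ⟨fun ⟨p, hp⟩ => Set.disjoint_left.1 (disjoint_K_of_dist_add_lt h₁₂) (hp 0) (hp 1)⟩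
  rw [ApolloniusSolutions, Nat.card_congr (Equiv.sumEmpty _ _), ← Set.coe_ofPred,
    Nat.card_coe_set_eq, setOf_circleTangent_eq_image h₂.le h₃.le h₁₂ h₁₃ h₂₃,
    Set.ncard_image_of_injective _ fun y y' h => (Prod.mk.inj h).1]
  exact ncard_union_ellipse_inter_union_ellipse h₂ h₃ h₁₂ h₁₃ h₂₃

/-- If `C₁` strictly surrounds `C₂` and `C₃`, which are externally disjoint from each
other, then the Apollonius problem has exactly 8 solutions. -/
theorem apollonius_surrounding_eight_solutions (x₁ x₂ x₃ : Pl) (r₁ r₂ r₃ : ℝ)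
    (h₁ : 0 < r₁) (h₂ : 0 < r₂) (h₃ : 0 < r₃)
    (h₁₂ : ‖x₂ - x₁‖ + r₂ < r₁) (h₁₃ : ‖x₃ - x₁‖ + r₃ < r₁)
    (h₂₃ : ‖x₂ - x₃‖ > r₂ + r₃) :
    Nat.card (ApolloniusSolutions ![x₁, x₂, x₃] ![r₁, r₂, r₃]) = 8 :=
  apollonius_surrounding_eight_solutions_general x₁ x₂ x₃ r₁ r₂ r₃ h₂ h₃ h₁₂ h₁₃ h₂₃
end
end

section
/- Let C₁ = K(x₁, r₁), C₂ = K(x₂, r₂), C₃ = K(x₃, r₃) be circles with rᵢ > 0 such that each pair crosses in two points, i.e. |rᵢ − rⱼ| < ‖xᵢ − xⱼ‖ < rᵢ + rⱼ for all i ≠ j, and such that the three circles have exactly one common point: C₁ ∩ C₂ ∩ C₃ = {p} for some p ∈ ℝ². Then the Apollonius problem for (C₁, C₂, C₃) has exactly 5 solutions. -/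
/-!
Orient each of the three circles by a sign, the first one positively: there are four such sign
patterns `ε`. A circle or line tangent to all three circles can be oriented so that it touches
them with orientations matching some pattern `ε`, and the pattern is unique.

Fix `ε`, put `ρ i = ε i * r i` and `a i = x i - p`. An oriented circle `(y, σ)`, resp. an oriented
line `⟪u, ·⟫ = d` with `‖u‖ = 1`, touches the oriented circles `(x i, ρ i)` iff for all `i`
  `⟪y - p, a i⟫ - (‖y - p‖² - σ²) / 2 = σ * ρ i`,  resp.  `⟪u, a i⟫ - (d - ⟪u, p⟫) = ρ i`.
The centers are affinely independent (otherwise reflecting `p` in their line would give a second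
common point), so `(w, μ) ↦ (⟪w, a i⟫ - μ)ᵢ` is a linear isomorphism `ℝ² × ℝ ≃ ℝ³`. If `(z, c)` is
the preimage of `ρ`, these equations become `y = p + σ • z` and `σ * (‖z‖² - 1) = 2 * c`, resp.
`u = z` and `‖z‖ = 1`. Moreover `c ≠ 0`, since otherwise two of the circles would be tangent at
`p`. So each pattern gives exactly one circle if `‖z‖ ≠ 1` and exactly one line if `‖z‖ = 1`;
together with the point `p` this makes `4 + 1 = 5` solutions.
-/

open RealInnerProductSpace

noncomputable section

open Function Module

lemma nonempty_equiv_of_forall_existsUnique {α β : Type*} (R : α → β → Prop)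
    (h₁ : ∀ a, ∃! b, R a b) (h₂ : ∀ b, ∃! a, R a b) : Nonempty (α ≃ β) := by
  choose f hf hfu using h₁
  refine ⟨Equiv.ofBijective f ⟨fun a a' h => ?_, fun b => ?_⟩⟩
  · obtain ⟨a₀, -, ha₀⟩ := h₂ (f a)
    exact (ha₀ a (hf a)).trans (ha₀ a' (h ▸ hf a')).symm
  · obtain ⟨a, ha, -⟩ := h₂ b
    exact ⟨a, (hfu a b ha).symm⟩

section Signs

variable {R : Type*}

lemma sq_eq_sq_iff_exists_units [CommRing R] [NoZeroDivisors R] {a b : R} :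
    a ^ 2 = b ^ 2 ↔ ∃ δ : ℤˣ, a = δ * b := by
  rw [sq_eq_sq_iff_eq_or_eq_neg]
  constructor
  · rintro (rfl | rfl)
    exacts [⟨1, by simp⟩, ⟨-1, by simp⟩]
  · rintro ⟨δ, rfl⟩
    rcases Int.units_eq_one_or δ with rfl | rfl <;> simp

lemma cast_units_sq [Ring R] (δ : ℤˣ) : ((δ : ℤ) : R) ^ 2 = 1 := by
  rcases Int.units_eq_one_or δ with rfl | rfl <;> simp

lemma abs_cast_units [Ring R] [LinearOrder R] [IsOrderedRing R] (δ : ℤˣ) : |((δ : ℤ) : R)| = 1 := by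
  rcases Int.units_eq_one_or δ with rfl | rfl <;> simp

lemma units_eq_of_mul_eq [Ring R] [CharZero R] [NoZeroDivisors R] {a : R} (ha : a ≠ 0)
    {δ δ' : ℤˣ} (h : (δ : R) * a = δ' * a) : δ = δ' :=
  Units.ext (Int.cast_injective (mul_right_cancel₀ ha h))

lemma units_eq_of_sq_sub_eq {a b : ℝ} (ha : a ≠ 0) (hb : b ≠ 0) {δ δ' : ℤˣ}
    (h : (δ * a - b) ^ 2 = (δ' * a - b) ^ 2) : δ = δ' := by
  rcases Int.units_eq_one_or δ with rfl | rfl <;> rcases Int.units_eq_one_or δ' with rfl | rfl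
  all_goals first
    | rfl
    | exact absurd (by simp at h; nlinarith : a * b = 0) (mul_ne_zero ha hb)

end Signs

section AffineEval

variable {E ι : Type*} [NormedAddCommGroup E] [InnerProductSpace ℝ E]

/-- `(w, μ)` stands for the affine function `q ↦ ⟪w, q - p⟫ - μ`, evaluated at the points `x i`. -/
def affineEval (x : ι → E) (p : E) : E × ℝ →ₗ[ℝ] ι → ℝ where
  toFun wμ i := ⟪wμ.1, x i - p⟫ - wμ.2
  map_add' _ _ := by ext; simp only [Prod.fst_add, Prod.snd_add, inner_add_left, Pi.add_apply]; ring
  map_smul' _ _ := by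
    ext; simp only [Prod.smul_fst, Prod.smul_snd, real_inner_smul_left, smul_eq_mul,
      RingHom.id_apply, Pi.smul_apply]; ring

@[simp] lemma affineEval_apply (x : ι → E) (p : E) (wμ : E × ℝ) (i : ι) :
    affineEval x p wμ i = ⟪wμ.1, x i - p⟫ - wμ.2 := rfl

variable {x : ι → E}

lemma affineEval_injective (p : E) (hx : affineSpan ℝ (Set.range x) = ⊤) :
    Injective (affineEval x p) := by
  rw [← LinearMap.ker_eq_bot, LinearMap.ker_eq_bot']
  rintro ⟨w, μ⟩ hwμ
  have hconst (i : ι) : ⟪w, x i - p⟫ = μ := sub_eq_zero.mp (congrFun hwμ i)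
  have hker : vectorSpan ℝ (Set.range x) ≤ LinearMap.ker (innerₛₗ ℝ w) := by
    rw [vectorSpan_def, Submodule.span_le]
    rintro _ ⟨_, ⟨i, rfl⟩, _, ⟨j, rfl⟩, rfl⟩
    simp only [SetLike.mem_coe, LinearMap.mem_ker, innerₛₗ_apply_apply, vsub_eq_sub]
    rw [← sub_sub_sub_cancel_right (x i) (x j) p, inner_sub_right, hconst, hconst, sub_self]
  rw [← direction_affineSpan, hx, AffineSubspace.direction_top] at hker
  have hw : w = 0 := inner_self_eq_zero.mp (hker Submodule.mem_top)
  obtain ⟨_, i, -⟩ : (Set.range x).Nonempty := by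
    rw [Set.nonempty_iff_ne_empty, Ne, ← affineSpan_eq_bot ℝ, hx]
    exact top_ne_bot
  simp [hw, ← hconst i]

lemma affineEval_bijective [Fintype ι] [FiniteDimensional ℝ E] (p : E)
    (hx : AffineIndependent ℝ x) (hcard : Fintype.card ι = finrank ℝ E + 1) :
    Bijective (affineEval x p) := by
  have hinj := affineEval_injective p (hx.affineSpan_eq_top_iff_card_eq_finrank_add_one.2 hcard)
  refine ⟨hinj, (LinearMap.injective_iff_surjective_of_finrank_eq_finrank ?_).1 hinj⟩
  simp [hcard]

variable {p : E} {ρ : ι → ℝ} {z : E} {c : ℝ}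

lemma dist_sq_eq_sub_sq_iff {y x : E} {σ ρ : ℝ} (hx : ‖x - p‖ = |ρ|) :
    dist y x ^ 2 = (σ - ρ) ^ 2 ↔ ⟪y - p, x - p⟫ - (‖y - p‖ ^ 2 - σ ^ 2) / 2 = σ * ρ := by
  have : dist y x ^ 2 = ‖y - p‖ ^ 2 - 2 * ⟪y - p, x - p⟫ + ρ ^ 2 := by
    rw [dist_eq_norm, ← sq_abs ρ, ← hx, ← norm_sub_sq_real, sub_sub_sub_cancel_right]
  rw [this]
  constructor <;> intro h <;> linarith

lemma forall_dist_sq_eq_sub_sq_iff (hinj : Injective (affineEval x p))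
    (hx : ∀ i, ‖x i - p‖ = |ρ i|) (hzc : affineEval x p (z, c) = ρ) (y : E) (σ : ℝ) :
    (∀ i, dist y (x i) ^ 2 = (σ - ρ i) ^ 2) ↔
      y = p + σ • z ∧ σ ^ 2 * (‖z‖ ^ 2 - 1) = 2 * σ * c := by
  have hsys : (∀ i, dist y (x i) ^ 2 = (σ - ρ i) ^ 2) ↔
      affineEval x p (y - p, (‖y - p‖ ^ 2 - σ ^ 2) / 2) = affineEval x p (σ • (z, c)) := by
    rw [map_smul, hzc, funext_iff]
    simp [dist_sq_eq_sub_sq_iff (hx _)]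
  have hnorm : ‖σ • z‖ ^ 2 = σ ^ 2 * ‖z‖ ^ 2 := by
    rw [norm_smul, mul_pow, Real.norm_eq_abs, sq_abs]
  rw [hsys, hinj.eq_iff, Prod.smul_mk, Prod.mk.injEq, sub_eq_iff_eq_add', smul_eq_mul]
  constructor
  · rintro ⟨rfl, h⟩
    rw [add_sub_cancel_left, hnorm] at h
    exact ⟨rfl, by linarith⟩
  · rintro ⟨rfl, h⟩
    rw [add_sub_cancel_left, hnorm]
    exact ⟨rfl, by linarith⟩

lemma forall_inner_sub_eq_iff (hinj : Injective (affineEval x p))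
    (hzc : affineEval x p (z, c) = ρ) (u : E) (d : ℝ) :
    (∀ i, ⟪u, x i⟫ - d = ρ i) ↔ u = z ∧ d = ⟪z, p⟫ + c := by
  have hsys : (∀ i, ⟪u, x i⟫ - d = ρ i) ↔
      affineEval x p (u, d - ⟪u, p⟫) = affineEval x p (z, c) := by
    rw [hzc, funext_iff]
    simp [inner_sub_right]
  rw [hsys, hinj.eq_iff, Prod.mk.injEq]
  constructor <;> rintro ⟨rfl, h⟩ <;> exact ⟨rfl, by linarith⟩

end AffineEval

section Lines

variable {E : Type*} [NormedAddCommGroup E] [InnerProductSpace ℝ E]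

lemma exists_unit_normal [FiniteDimensional ℝ E] (hE : finrank ℝ E = 2) {L : AffineSubspace ℝ E}
    (hL : finrank ℝ L.direction = 1) : ∃ u d, ‖u‖ = 1 ∧ ∀ q, q ∈ L ↔ ⟪u, q⟫ = d := by
  obtain ⟨q₀, hq₀⟩ : (L : Set E).Nonempty := by
    rw [Set.nonempty_iff_ne_empty, Ne, AffineSubspace.coe_eq_bot_iff]
    rintro rfl
    rw [AffineSubspace.direction_bot, finrank_bot] at hL
    exact zero_ne_one hL
  set D := L.direction
  have hDperp : finrank ℝ Dᗮ = 1 := by have := D.finrank_add_finrank_orthogonal; omega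
  obtain ⟨⟨v, hvD⟩, hv, hspan⟩ := finrank_eq_one_iff'.1 hDperp
  have hv0 : v ≠ 0 := by simpa using hv
  have hD (w : E) : w ∈ D ↔ ⟪v, w⟫ = 0 := by
    refine ⟨fun hw => Submodule.inner_left_of_mem_orthogonal hw hvD, fun hw => ?_⟩
    rw [← D.orthogonal_orthogonal, Submodule.mem_orthogonal]
    intro y hy
    obtain ⟨t, ht⟩ := hspan ⟨y, hy⟩
    rw [show y = t • v by simpa using (congrArg Subtype.val ht).symm, real_inner_smul_left, hw,
      mul_zero]
  refine ⟨‖v‖⁻¹ • v, ⟪‖v‖⁻¹ • v, q₀⟫, by simp [norm_smul, hv0], fun q => ?_⟩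
  rw [← AffineSubspace.vsub_right_mem_direction_iff_mem hq₀, vsub_eq_sub, hD, real_inner_smul_left,
    real_inner_smul_left, inner_sub_right, mul_eq_mul_left_iff, sub_eq_zero]
  simp [hv0]

lemma exists_affineSubspace_inner_eq [FiniteDimensional ℝ E] (hE : finrank ℝ E = 2) {u : E}
    (hu : u ≠ 0) (d : ℝ) :
    ∃ L : AffineSubspace ℝ E, finrank ℝ L.direction = 1 ∧ ∀ q, q ∈ L ↔ ⟪u, q⟫ = d := by
  refine ⟨AffineSubspace.mk' ((d / ⟪u, u⟫) • u) (ℝ ∙ u)ᗮ, ?_, fun q => ?_⟩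
  · have := (ℝ ∙ u).finrank_add_finrank_orthogonal
    rw [finrank_span_singleton hu] at this
    rw [AffineSubspace.direction_mk']
    omega
  · rw [AffineSubspace.mem_mk', vsub_eq_sub, Submodule.mem_orthogonal_singleton_iff_inner_right,
      inner_sub_right, real_inner_smul_right, div_mul_cancel₀ _ (inner_self_ne_zero.2 hu),
      sub_eq_zero]

lemma exists_units_of_forall_inner_eq_iff {u u' : E} {d d' : ℝ} (hu : ‖u‖ = 1) (hu' : ‖u'‖ = 1)
    (h : ∀ q, ⟪u, q⟫ = d ↔ ⟪u', q⟫ = d') : ∃ t : ℤˣ, u' = (t : ℝ) • u ∧ d' = t * d := by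
  set t := ⟪u, u'⟫
  set w := u' - t • u
  have huu : ⟪u, u⟫ = 1 := by rw [real_inner_self_eq_norm_sq, hu, one_pow]
  have hwu : ⟪u, w⟫ = 0 := by
    simp only [w, t, inner_sub_right, real_inner_smul_right, huu, mul_one, sub_self]
  have hd' : ⟪u', d • u⟫ = d' := (h _).1 (by rw [real_inner_smul_right, huu, mul_one])
  have hwu' : ⟪u', w⟫ = 0 := by
    have := (h (d • u + w)).1 (by rw [inner_add_right, real_inner_smul_right, huu, hwu]; ring)
    rw [inner_add_right, hd'] at this
    linarith
  have hw : w = 0 := by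
    rw [← inner_self_eq_zero (𝕜 := ℝ)]
    show ⟪u' - t • u, w⟫ = 0
    rw [inner_sub_left, real_inner_smul_left, hwu', hwu, mul_zero, sub_zero]
  have hu't : u' = t • u := sub_eq_zero.mp hw
  have ht : t = 1 ∨ t = -1 := by
    rw [← abs_eq zero_le_one, ← hu', hu't, norm_smul, hu, mul_one, Real.norm_eq_abs]
  have hd't : d' = t * d := by
    rw [← hd', hu't, real_inner_smul_left, real_inner_smul_right, huu, mul_one]
  rcases ht with ht | ht
  · exact ⟨1, by simp [hu't, hd't, ht]⟩
  · exact ⟨-1, by simp [hu't, hd't, ht]⟩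

lemma dist_sq_eq_dist_sq_add_sq_of_inner_eq {u : E} (hu : ‖u‖ = 1) {d : ℝ} {q : E}
    (hq : ⟪u, q⟫ = d) (x : E) :
    dist q x ^ 2 = dist q (x - (⟪u, x⟫ - d) • u) ^ 2 + (⟪u, x⟫ - d) ^ 2 := by
  set h := ⟪u, x⟫ - d
  have huu : ⟪u, u⟫ = 1 := by rw [real_inner_self_eq_norm_sq, hu, one_pow]
  have horth : ⟪u, q - (x - h • u)⟫ = 0 := by
    simp only [h, inner_sub_right, real_inner_smul_right, huu, hq]
    ring
  rw [dist_eq_norm, dist_eq_norm, show q - x = (q - (x - h • u)) - h • u by abel,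
    norm_sub_sq_real, real_inner_smul_right, real_inner_comm, horth, norm_smul, hu,
    Real.norm_eq_abs, mul_one, sq_abs]
  ring

end Lines

lemma lineTangent_iff {L : AffineSubspace ℝ Pl} {u : Pl} {d : ℝ} (hu : ‖u‖ = 1)
    (hL : ∀ q, q ∈ L ↔ ⟪u, q⟫ = d) {x : Pl} {r : ℝ} (hr : 0 ≤ r) :
    LineTangent L x r ↔ (⟪u, x⟫ - d) ^ 2 = r ^ 2 := by
  set h := ⟪u, x⟫ - d
  -- `f` is the foot of the perpendicular from `x` to `L`
  set f := x - h • u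
  have hf : f ∈ L := by
    rw [hL, inner_sub_right, real_inner_smul_right, real_inner_self_eq_norm_sq, hu]
    ring
  have hK (q : Pl) (hq : q ∈ L) : q ∈ K x r ↔ dist q f ^ 2 = r ^ 2 - h ^ 2 := by
    show dist q x = r ↔ _
    rw [← pow_left_inj₀ dist_nonneg hr two_ne_zero,
      dist_sq_eq_dist_sq_add_sq_of_inner_eq hu ((hL q).1 hq) x]
    constructor <;> intro <;> linarith
  constructor
  · rintro ⟨q, ⟨hqL, hqK⟩, huniq⟩
    rw [SetLike.mem_coe] at hqL
    -- the reflection of `q` in `f` is another common point, so `q = f`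
    set q' := (2 : ℝ) • f - q
    have hq'L : q' ∈ L := by
      rw [hL] at hqL hf ⊢
      rw [inner_sub_right, real_inner_smul_right, hf, hqL]
      ring
    have hq'f : dist q' f = dist q f := by
      rw [dist_eq_norm, dist_eq_norm, ← norm_neg]
      congr 1
      simp only [q', two_smul]
      abel
    have hqf : q = f := by
      have h2 : (2 : ℝ) • f - q = q :=
        huniq q' ⟨hq'L, by rw [hK q' hq'L, hq'f, ← hK q hqL]; exact hqK⟩
      rw [sub_eq_iff_eq_add, ← two_smul ℝ q] at h2
      exact (smul_right_injective Pl two_ne_zero h2).symm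
    have := (hK q hqL).1 hqK
    rw [hqf, dist_self] at this
    linarith
  · intro hh
    refine ⟨f, ⟨hf, by rw [hK f hf, dist_self, hh]; ring⟩, fun q ⟨hqL, hqK⟩ => ?_⟩
    rw [hK q hqL, hh, sub_self, sq_eq_zero_iff, dist_eq_zero] at hqK
    exact hqK

lemma circleTangent_iff_exists_units {y x : Pl} {s r : ℝ} (hs : 0 ≤ s) (hr : 0 ≤ r) :
    CircleTangent y s x r ↔ ∃ δ : ℤˣ, dist y x ^ 2 = (s - δ * r) ^ 2 := by
  have hd : 0 ≤ dist y x := dist_nonneg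
  constructor
  · rintro (h | h)
    · exact ⟨-1, by rw [h]; push_cast; ring⟩
    · exact ⟨1, by rw [h, sq_abs]; push_cast; ring⟩
  · rintro ⟨δ, h⟩
    rcases Int.units_eq_one_or δ with rfl | rfl
    · right
      rw [← abs_of_nonneg hd, ← sq_eq_sq_iff_abs_eq_abs]
      simpa using h
    · left
      rw [← pow_left_inj₀ hd (by positivity) two_ne_zero]
      simpa using h

lemma not_circleTangent {x y : Pl} {r s : ℝ} (h : |r - s| < ‖x - y‖ ∧ ‖x - y‖ < r + s) :
    ¬ CircleTangent x r y s := by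
  rw [← dist_eq_norm] at h
  rintro (h' | h') <;> linarith [h.1, h.2]

lemma circleTangent_comm {x y : Pl} {r s : ℝ} : CircleTangent x r y s ↔ CircleTangent y s x r := by
  rw [CircleTangent, CircleTangent, dist_comm, add_comm, abs_sub_comm]

lemma circleTangent_of_collinear {p x y : Pl} {r s : ℝ} (hx : dist p x = r) (hy : dist p y = s)
    (h : Collinear ℝ {p, x, y}) : CircleTangent x r y s := by
  have hxy : 0 ≤ dist x y := dist_nonneg
  rcases h.wbtw_or_wbtw_or_wbtw with h | h | h
  · have := h.dist_add_dist
    right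
    rw [abs_sub_comm, abs_of_nonneg] <;> linarith
  · have := h.dist_add_dist
    rw [dist_comm y p, dist_comm x p] at this
    right
    rw [abs_of_nonneg] <;> linarith
  · have := h.dist_add_dist
    rw [dist_comm y p, dist_comm y x] at this
    left
    linarith

lemma affineIndependent_of_not_circleTangent {x : Fin 3 → Pl} {r : Fin 3 → ℝ} {p : Pl}
    (hx : Pairwise fun i j => ¬ CircleTangent (x i) (r i) (x j) (r j))
    (hp : ∀ q, (∀ i, q ∈ K (x i) (r i)) ↔ q = p) : AffineIndependent ℝ x := by
  have hpx (i : Fin 3) : dist p (x i) = r i := (hp p).2 rfl i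
  have hcol : ¬ Collinear ℝ {p, x 0, x 1} :=
    fun h => hx (by decide) (circleTangent_of_collinear (hpx 0) (hpx 1) h)
  have hx01 : x 0 ≠ x 1 := by
    intro h
    rw [h, Set.pair_eq_singleton] at hcol
    exact hcol (collinear_pair ℝ _ _)
  rw [affineIndependent_iff_not_collinear]
  intro hxcol
  set s := line[ℝ, x 0, x 1]
  have hxs (i : Fin 3) : x i ∈ s := hxcol.mem_affineSpan_of_mem_of_ne
    (Set.mem_range_self 0) (Set.mem_range_self 1) (Set.mem_range_self i) hx01
  -- reflecting `p` in the line of centers gives a common point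
  have hps : EuclideanGeometry.reflection s p = p := (hp _).1 fun i => by
    show dist _ (x i) = r i
    rw [dist_comm, EuclideanGeometry.dist_reflection_eq_of_mem s (hxs i), dist_comm, hpx]
  rw [EuclideanGeometry.reflection_eq_self_iff] at hps
  exact hcol (collinear_insert_of_mem_affineSpan_pair hps)

lemma not_injective_of_norm_eq_one_of_inner_eq_one {u : Fin 3 → Pl} {z : Pl}
    (hu : ∀ i, ‖u i‖ = 1) (hz : ∀ i, ⟪z, u i⟫ = 1) : ¬ Injective u := by
  intro hinj
  have hz0 : (0 : Pl) ≠ z := by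
    rintro rfl
    simpa using hz 0
  have hu0 (i : Fin 3) : dist (u i) 0 = 1 := by simp [hu]
  -- the `u i` also lie on a circle centred at `z`
  have huz (i : Fin 3) : dist (u i) z = dist (u 0) z := by
    rw [← pow_left_inj₀ dist_nonneg dist_nonneg two_ne_zero]
    simp only [dist_eq_norm, norm_sub_sq_real, hu, real_inner_comm z, hz]
  rcases EuclideanGeometry.eq_of_dist_eq_of_dist_eq_of_finrank_eq_two (by simp) hz0
    (hinj.ne (by decide : (0 : Fin 3) ≠ 1)) (hu0 0) (hu0 1) (hu0 2) (huz 0) (huz 1) (huz 2)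
    with h | h
  · exact absurd (hinj h) (by decide)
  · exact absurd (hinj h) (by decide)

lemma not_forall_inner_sub_eq {x : Fin 3 → Pl} {r ρ : Fin 3 → ℝ} {p : Pl} (hr : ∀ i, 0 < r i)
    (hx : Pairwise fun i j => ¬ CircleTangent (x i) (r i) (x j) (r j))
    (hpx : ∀ i, dist p (x i) = r i) (hρ : ∀ i, |ρ i| = r i) (z : Pl) :
    ¬ ∀ i, ⟪z, x i - p⟫ = ρ i := by
  intro hz
  have hρ0 (i : Fin 3) : ρ i ≠ 0 := by
    rw [← abs_ne_zero, hρ]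
    exact (hr i).ne'
  refine not_injective_of_norm_eq_one_of_inner_eq_one (u := fun i => (ρ i)⁻¹ • (x i - p)) (z := z)
    (fun i => ?_) (fun i => ?_) fun i j hij => by_contra fun hne => hx hne ?_
  · rw [norm_smul, ← dist_eq_norm, dist_comm, hpx, norm_inv, Real.norm_eq_abs, hρ,
      inv_mul_cancel₀ (hr i).ne']
  · rw [real_inner_smul_right, hz, inv_mul_cancel₀ (hρ0 i)]
  · refine circleTangent_of_collinear (hpx i) (hpx j) ?_
    have hxj : x j = AffineMap.lineMap p (x i) (ρ j / ρ i) := by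
      rw [AffineMap.lineMap_apply, vsub_eq_sub, vadd_eq_add, div_eq_mul_inv, ← smul_smul,
        show (ρ i)⁻¹ • (x i - p) = (ρ j)⁻¹ • (x j - p) from hij, smul_smul,
        mul_inv_cancel₀ (hρ0 j), one_smul, sub_add_cancel]
    have := collinear_insert_of_mem_affineSpan_pair
      (hxj ▸ AffineMap.lineMap_mem_affineSpan_pair (ρ j / ρ i) p (x i))
    rwa [Set.insert_comm, Set.pair_comm] at this

/-- The orientations of the three circles, up to reversing all of them. -/
abbrev SignPattern : Type := {ε : Fin 3 → ℤˣ // ε 0 = 1}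

lemma card_signPattern : Nat.card SignPattern = 4 := by
  rw [Nat.card_eq_fintype_card]
  decide

abbrev TangentCircles (x : Fin 3 → Pl) (r : Fin 3 → ℝ) : Type :=
  {ys : Pl × ℝ // 0 < ys.2 ∧ ∀ i, CircleTangent ys.1 ys.2 (x i) (r i)}

abbrev TangentLines (x : Fin 3 → Pl) (r : Fin 3 → ℝ) : Type :=
  {L : AffineSubspace ℝ Pl // finrank ℝ L.direction = 1 ∧ ∀ i, LineTangent L (x i) (r i)}

/-- Some orientation `δ` of the circle `(y, s)` touches each circle `(x i, r i)` oriented by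
`ε i` with matching orientations at the point of contact. -/
def IsCirclePattern (x : Fin 3 → Pl) (r : Fin 3 → ℝ) (ε : Fin 3 → ℤˣ) (y : Pl) (s : ℝ) : Prop :=
  ∃ δ : ℤˣ, ∀ i, dist y (x i) ^ 2 = (δ * s - ε i * r i) ^ 2

/-- Some orientation `u` of the line `L` touches each circle `(x i, r i)` oriented by `ε i`
with matching orientations at the point of contact. -/
def IsLinePattern (x : Fin 3 → Pl) (r : Fin 3 → ℝ) (ε : Fin 3 → ℤˣ) (L : AffineSubspace ℝ Pl) :
    Prop :=
  ∃ u d, ‖u‖ = 1 ∧ (∀ q, q ∈ L ↔ ⟪u, q⟫ = d) ∧ ∀ i, ⟪u, x i⟫ - d = ε i * r i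

def HasSignPattern (x : Fin 3 → Pl) (r : Fin 3 → ℝ) (t : TangentCircles x r ⊕ TangentLines x r)
    (ε : SignPattern) : Prop :=
  t.elim (fun C => IsCirclePattern x r ε C.1.1 C.1.2) (fun L => IsLinePattern x r ε L.1)

variable {x : Fin 3 → Pl} {r : Fin 3 → ℝ}

lemma IsCirclePattern.circleTangent {ε : Fin 3 → ℤˣ} {y : Pl} {s : ℝ}
    (h : IsCirclePattern x r ε y s) (hs : 0 ≤ s) (hr : ∀ i, 0 ≤ r i) (i : Fin 3) :
    CircleTangent y s (x i) (r i) := by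
  obtain ⟨δ, hδ⟩ := h
  rw [circleTangent_iff_exists_units hs (hr i)]
  refine ⟨δ * ε i, ?_⟩
  rw [hδ i]
  push_cast
  linear_combination (s ^ 2 - (ε i : ℝ) ^ 2 * r i ^ 2) * cast_units_sq (R := ℝ) δ

lemma IsCirclePattern.unique (hr : ∀ i, 0 < r i) {y : Pl} {s : ℝ} (hs : 0 < s)
    {ε ε' : SignPattern} (h : IsCirclePattern x r ε y s) (h' : IsCirclePattern x r ε' y s) :
    ε = ε' := by
  obtain ⟨δ, hδ⟩ := h
  obtain ⟨δ', hδ'⟩ := h'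
  obtain rfl : δ = δ' := units_eq_of_sq_sub_eq hs.ne' (hr 0).ne' (by
    simpa [ε.2, ε'.2] using (hδ 0).symm.trans (hδ' 0))
  refine Subtype.ext (funext fun i => units_eq_of_sq_sub_eq (hr i).ne'
    (mul_ne_zero (Int.cast_ne_zero.2 δ.ne_zero) hs.ne') ?_)
  linear_combination (hδ i).symm.trans (hδ' i)

lemma existsUnique_isCirclePattern (hr : ∀ i, 0 < r i) {y : Pl} {s : ℝ} (hs : 0 < s)
    (ht : ∀ i, CircleTangent y s (x i) (r i)) : ∃! ε : SignPattern, IsCirclePattern x r ε y s := by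
  choose δ hδ using fun i => (circleTangent_iff_exists_units hs.le (hr i).le).1 (ht i)
  refine existsUnique_of_exists_of_unique
    ⟨⟨fun i => δ 0 * δ i, Int.units_mul_self _⟩, δ 0, fun i => ?_⟩
    fun ε ε' => IsCirclePattern.unique hr hs
  rw [hδ i]
  push_cast
  linear_combination (-(s - (δ i : ℝ) * r i) ^ 2) * cast_units_sq (R := ℝ) (δ 0)

lemma IsLinePattern.lineTangent {ε : Fin 3 → ℤˣ} {L : AffineSubspace ℝ Pl}
    (h : IsLinePattern x r ε L) (hr : ∀ i, 0 ≤ r i) (i : Fin 3) : LineTangent L (x i) (r i) := by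
  obtain ⟨u, d, hu, hL, hx⟩ := h
  rw [lineTangent_iff hu hL (hr i), hx i, mul_pow, cast_units_sq, one_mul]

lemma IsLinePattern.unique (hr : ∀ i, 0 < r i) {L : AffineSubspace ℝ Pl} {ε ε' : SignPattern}
    (h : IsLinePattern x r ε L) (h' : IsLinePattern x r ε' L) : ε = ε' := by
  obtain ⟨u, d, hu, hL, hx⟩ := h
  obtain ⟨u', d', hu', hL', hx'⟩ := h'
  obtain ⟨t, rfl, rfl⟩ :=
    exists_units_of_forall_inner_eq_iff hu hu' fun q => (hL q).symm.trans (hL' q)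
  have hε (i : Fin 3) : (ε'.1 i : ℝ) * r i = t * ε.1 i * r i := by
    rw [← hx' i, mul_assoc, ← hx i, real_inner_smul_left]
    ring
  obtain rfl : t = 1 := units_eq_of_mul_eq (hr 0).ne' (by simpa [ε.2, ε'.2] using (hε 0).symm)
  exact Subtype.ext (funext fun i => units_eq_of_mul_eq (hr i).ne' (by simpa using (hε i).symm))

lemma existsUnique_isLinePattern (hr : ∀ i, 0 < r i) {L : AffineSubspace ℝ Pl}
    (hL : finrank ℝ L.direction = 1) (ht : ∀ i, LineTangent L (x i) (r i)) :
    ∃! ε : SignPattern, IsLinePattern x r ε L := by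
  obtain ⟨u, d, hu, hLud⟩ := exists_unit_normal (by simp) hL
  choose δ hδ using fun i =>
    sq_eq_sq_iff_exists_units.1 ((lineTangent_iff hu hLud (hr i).le).1 (ht i))
  have hδ0 : ((δ 0 : ℤ) : ℝ) ≠ 0 := Int.cast_ne_zero.2 (δ 0).ne_zero
  refine existsUnique_of_exists_of_unique ⟨⟨fun i => δ 0 * δ i, Int.units_mul_self _⟩,
    (δ 0 : ℝ) • u, δ 0 * d, ?_, fun q => ?_, fun i => ?_⟩ fun ε ε' => IsLinePattern.unique hr
  · rw [norm_smul, Real.norm_eq_abs, abs_cast_units, hu, one_mul]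
  · rw [hLud, real_inner_smul_left, mul_right_inj' hδ0]
  · rw [real_inner_smul_left, ← mul_sub, hδ i]
    push_cast
    ring

section Pattern

variable {p z : Pl} {c : ℝ} {ε : SignPattern}

lemma isCirclePattern_iff (hinj : Injective (affineEval x p))
    (hxρ : ∀ i, ‖x i - p‖ = |(ε.1 i : ℝ) * r i|)
    (hzc : affineEval x p (z, c) = fun i => (ε.1 i : ℝ) * r i) {y : Pl} {s : ℝ} (hs : 0 < s) :
    IsCirclePattern x r ε y s ↔ ∃ σ : ℝ, |σ| = s ∧ y = p + σ • z ∧ σ * (‖z‖ ^ 2 - 1) = 2 * c := by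
  simp only [IsCirclePattern, forall_dist_sq_eq_sub_sq_iff hinj hxρ hzc]
  constructor
  · rintro ⟨δ, hy, hσ⟩
    have hδs : (δ : ℝ) * s ≠ 0 := mul_ne_zero (Int.cast_ne_zero.2 δ.ne_zero) hs.ne'
    refine ⟨δ * s, by rw [abs_mul, abs_cast_units, one_mul, abs_of_pos hs], hy,
      mul_left_cancel₀ hδs (by linear_combination hσ)⟩
  · rintro ⟨σ, rfl, hy, hσ⟩
    obtain ⟨δ, hδ⟩ : ∃ δ : ℤˣ, (δ : ℝ) * |σ| = σ := by
      rcases abs_choice σ with h | h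
      exacts [⟨1, by simp [h]⟩, ⟨-1, by simp [h]⟩]
    exact ⟨δ, by rw [hδ]; exact ⟨hy, by linear_combination σ * hσ⟩⟩

lemma isLinePattern_iff (hinj : Injective (affineEval x p))
    (hzc : affineEval x p (z, c) = fun i => (ε.1 i : ℝ) * r i) {L : AffineSubspace ℝ Pl} :
    IsLinePattern x r ε L ↔ ‖z‖ = 1 ∧ ∀ q, q ∈ L ↔ ⟪z, q⟫ = ⟪z, p⟫ + c := by
  simp only [IsLinePattern, forall_inner_sub_eq_iff hinj hzc]
  constructor
  · rintro ⟨u, d, hu, hL, rfl, rfl⟩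
    exact ⟨hu, hL⟩
  · rintro ⟨hz, hL⟩
    exact ⟨z, _, hz, hL, rfl, rfl⟩

end Pattern

lemma existsUnique_hasSignPattern_of_norm_eq_one {p z : Pl} {c : ℝ} {ε : SignPattern}
    (hr : ∀ i, 0 < r i) (hinj : Injective (affineEval x p))
    (hxρ : ∀ i, ‖x i - p‖ = |(ε.1 i : ℝ) * r i|)
    (hzc : affineEval x p (z, c) = fun i => (ε.1 i : ℝ) * r i) (hc : c ≠ 0) (hz : ‖z‖ = 1) :
    ∃! t, HasSignPattern x r t ε := by
  obtain ⟨L, hL1, hL⟩ := exists_affineSubspace_inner_eq (by simp)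
    (norm_ne_zero_iff.1 (hz ▸ one_ne_zero)) (⟪z, p⟫ + c)
  have hLpat : IsLinePattern x r ε L := (isLinePattern_iff hinj hzc).2 ⟨hz, hL⟩
  refine ⟨.inr ⟨L, hL1, hLpat.lineTangent fun i => (hr i).le⟩, hLpat, ?_⟩
  rintro (⟨⟨y, s⟩, hs, _⟩ | ⟨L', _, _⟩) h
  · obtain ⟨σ, -, -, hσ⟩ := (isCirclePattern_iff hinj hxρ hzc hs).1 h
    rw [hz] at hσ
    exact absurd (by linarith : c = 0) hc
  · obtain ⟨-, hL'⟩ := (isLinePattern_iff hinj hzc).1 h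
    exact congrArg Sum.inr (Subtype.ext (AffineSubspace.ext fun q => (hL' q).trans (hL q).symm))

lemma existsUnique_hasSignPattern_of_norm_ne_one {p z : Pl} {c : ℝ} {ε : SignPattern}
    (hr : ∀ i, 0 < r i) (hinj : Injective (affineEval x p))
    (hxρ : ∀ i, ‖x i - p‖ = |(ε.1 i : ℝ) * r i|)
    (hzc : affineEval x p (z, c) = fun i => (ε.1 i : ℝ) * r i) (hc : c ≠ 0) (hz : ‖z‖ ≠ 1) :
    ∃! t, HasSignPattern x r t ε := by
  have hk : ‖z‖ ^ 2 - 1 ≠ 0 := by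
    rwa [sub_ne_zero, Ne, pow_eq_one_iff_of_nonneg (norm_nonneg z) two_ne_zero]
  set σ := 2 * c / (‖z‖ ^ 2 - 1)
  have hσ : 0 < |σ| := abs_pos.2 (div_ne_zero (mul_ne_zero two_ne_zero hc) hk)
  have hpat : IsCirclePattern x r ε (p + σ • z) |σ| :=
    (isCirclePattern_iff hinj hxρ hzc hσ).2 ⟨σ, rfl, rfl, div_mul_cancel₀ _ hk⟩
  refine ⟨.inl ⟨(p + σ • z, |σ|), hσ, hpat.circleTangent hσ.le fun i => (hr i).le⟩, hpat, ?_⟩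
  rintro (⟨⟨y, s⟩, hs, _⟩ | ⟨L, _, _⟩) h
  · obtain ⟨σ', rfl, rfl, hσ'⟩ := (isCirclePattern_iff hinj hxρ hzc hs).1 h
    obtain rfl : σ' = σ := eq_div_of_mul_eq hk hσ'
    rfl
  · exact absurd ((isLinePattern_iff hinj hzc).1 h).1 hz

lemma existsUnique_hasSignPattern (hr : ∀ i, 0 < r i)
    (hx : Pairwise fun i j => ¬ CircleTangent (x i) (r i) (x j) (r j)) {p : Pl}
    (hp : ∀ q, (∀ i, q ∈ K (x i) (r i)) ↔ q = p) (ε : SignPattern) :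
    ∃! t, HasSignPattern x r t ε := by
  have hpx (i : Fin 3) : dist p (x i) = r i := (hp p).2 rfl i
  have hρ (i : Fin 3) : |(ε.1 i : ℝ) * r i| = r i := by
    rw [abs_mul, abs_cast_units, one_mul, abs_of_pos (hr i)]
  have hxρ (i : Fin 3) : ‖x i - p‖ = |(ε.1 i : ℝ) * r i| := by
    rw [hρ, ← dist_eq_norm, dist_comm, hpx]
  have hΦ := affineEval_bijective p (affineIndependent_of_not_circleTangent hx hp) (by simp)
  obtain ⟨⟨z, c⟩, hzc⟩ := hΦ.2 fun i => (ε.1 i : ℝ) * r i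
  have hc : c ≠ 0 := by
    rintro rfl
    exact not_forall_inner_sub_eq hr hx hpx hρ z fun i => by simpa using congrFun hzc i
  by_cases hz : ‖z‖ = 1
  exacts [existsUnique_hasSignPattern_of_norm_eq_one hr hΦ.1 hxρ hzc hc hz,
    existsUnique_hasSignPattern_of_norm_ne_one hr hΦ.1 hxρ hzc hc hz]

theorem card_apolloniusSolutions (hr : ∀ i, 0 < r i)
    (hx : Pairwise fun i j => ¬ CircleTangent (x i) (r i) (x j) (r j)) {p : Pl}
    (hp : ∀ q, (∀ i, q ∈ K (x i) (r i)) ↔ q = p) : Nat.card (ApolloniusSolutions x r) = 5 := by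
  obtain ⟨e⟩ := nonempty_equiv_of_forall_existsUnique (HasSignPattern x r)
    (by
      rintro (⟨⟨y, s⟩, hs, ht⟩ | ⟨L, hL, ht⟩)
      exacts [existsUnique_isCirclePattern hr hs ht, existsUnique_isLinePattern hr hL ht])
    (existsUnique_hasSignPattern hr hx hp)
  calc Nat.card (ApolloniusSolutions x r)
      = Nat.card ((TangentCircles x r ⊕ TangentLines x r) ⊕ {q : Pl // ∀ i, q ∈ K (x i) (r i)}) :=
        Nat.card_congr (Equiv.sumAssoc _ _ _).symm
    _ = Nat.card (SignPattern ⊕ {q : Pl // q = p}) :=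
        Nat.card_congr (e.sumCongr (Equiv.subtypeEquivRight hp))
    _ = 5 := by rw [Nat.card_sum, card_signPattern, Nat.card_unique]

/-- If each pair of the three circles crosses in two points and the three circles have
exactly one common point, the Apollonius problem has exactly 5 solutions. -/
theorem apollonius_common_point_five_solutions (x₁ x₂ x₃ : Pl) (r₁ r₂ r₃ : ℝ)
    (h₁ : 0 < r₁) (h₂ : 0 < r₂) (h₃ : 0 < r₃)
    (h₁₂ : |r₁ - r₂| < ‖x₁ - x₂‖ ∧ ‖x₁ - x₂‖ < r₁ + r₂)
    (h₁₃ : |r₁ - r₃| < ‖x₁ - x₃‖ ∧ ‖x₁ - x₃‖ < r₁ + r₃)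
    (h₂₃ : |r₂ - r₃| < ‖x₂ - x₃‖ ∧ ‖x₂ - x₃‖ < r₂ + r₃)
    (p : Pl) (hp : K x₁ r₁ ∩ K x₂ r₂ ∩ K x₃ r₃ = {p}) :
    Nat.card (ApolloniusSolutions ![x₁, x₂, x₃] ![r₁, r₂, r₃]) = 5 := by
  refine card_apolloniusSolutions (p := p) (fun i => ?_) (fun i j hij => ?_) fun q => ?_
  · fin_cases i <;> assumption
  · have := not_circleTangent h₁₂
    have := not_circleTangent h₁₃
    have := not_circleTangent h₂₃
    fin_cases i <;> fin_cases j <;> simp_all [circleTangent_comm]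
  · simpa [Fin.forall_fin_succ, and_assoc] using Set.ext_iff.1 hp q
end
end

section
/- Let C₁ = K(x₁, r₁), C₂ = K(x₂, r₂), C₃ = K(x₃, r₃) be pairwise distinct circles with rᵢ > 0 having two common points: there exist p ≠ q with p and q lying on all three circles. Then the Apollonius problem for (C₁, C₂, C₃) has exactly 2 solutions (the two common points). -/
open RealInnerProductSpace

noncomputable section

/-!
The centers of all circles through `p ≠ q` lie on the perpendicular bisector of `pq`, so
`xᵢ = pencilCenter p q τᵢ` with pairwise distinct `τᵢ`, and the power of a point `z` with respect
to the `i`-th circle is `⟪z - p, z - q⟫ - 2 τᵢ cross (q - p) (z - p)`, affine in `τᵢ`.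
Tangency of a circle `(y, s)`, or of a line, to the `i`-th circle is then a quadratic equation in
`τᵢ` whose coefficients do not depend on `i`. Holding for three distinct `τᵢ`, all coefficients
vanish: for a circle this contradicts `s > 0`, for a line it forces the line to be `pq`, which is
not tangent. A point on two of the circles has power zero for two values of `τ`, hence lies on
the line `pq` and on the circle with diameter `pq`, i.e. is `p` or `q`.
-/

open Polynomial in
lemma eq_zero_of_quadratic_eq_zero_of_injective {R : Type*} [CommRing R] [IsDomain R] {a b c : R}
    {τ : Fin 3 → R} (hτ : Function.Injective τ) (h : ∀ i, a * τ i ^ 2 + b * τ i + c = 0) :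
    a = 0 ∧ b = 0 ∧ c = 0 := by
  have hP : C a * X ^ 2 + C b * X + C c = 0 :=
    eq_zero_of_natDegree_lt_card_of_eval_eq_zero _ hτ (by simpa using h)
      (natDegree_quadratic_le.trans_lt (by simp))
  refine ⟨?_, ?_, ?_⟩
  · simpa using congrArg (coeff · 2) hP
  · simpa using congrArg (coeff · 1) hP
  · simpa using congrArg (coeff · 0) hP

lemma Pl.inner_eq (a b : Pl) : ⟪a, b⟫ = a 0 * b 0 + a 1 * b 1 := by
  simp [PiLp.inner_apply, Fin.sum_univ_two, mul_comm]

lemma Pl.norm_sq_eq (a : Pl) : ‖a‖ ^ 2 = a 0 ^ 2 + a 1 ^ 2 := by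
  simp [EuclideanSpace.real_norm_sq_eq, Fin.sum_univ_two]

lemma Pl.dist_sq_eq (a b : Pl) : dist a b ^ 2 = (a 0 - b 0) ^ 2 + (a 1 - b 1) ^ 2 := by
  simp [dist_eq_norm, Pl.norm_sq_eq]

def cross (a b : Pl) : ℝ := a 0 * b 1 - a 1 * b 0

lemma mem_span_singleton_of_cross_eq_zero {u a : Pl} (hu : u ≠ 0) (h : cross u a = 0) :
    a ∈ ℝ ∙ u := by
  have hN : u 0 ^ 2 + u 1 ^ 2 ≠ 0 := by rw [← Pl.norm_sq_eq]; positivity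
  refine Submodule.mem_span_singleton.mpr ⟨⟪a, u⟫ / ‖u‖ ^ 2, ?_⟩
  rw [cross] at h
  ext i
  fin_cases i <;>
    simp only [Pl.inner_eq, Pl.norm_sq_eq, Fin.zero_eta, Fin.mk_one, Fin.isValue, PiLp.smul_apply,
      smul_eq_mul] <;> field_simp
  · linear_combination u 1 * h
  · linear_combination -u 0 * h

lemma CircleTangent.sq_eq {y x : Pl} {s r : ℝ} (h : CircleTangent y s x r) :
    (dist y x ^ 2 - s ^ 2 - r ^ 2) ^ 2 = 4 * s ^ 2 * r ^ 2 := by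
  rcases h with h | h <;> rw [h]
  · ring
  · rw [sq_abs]; ring

lemma LineTangent.exists_inner_eq_zero {L : AffineSubspace ℝ Pl} {x : Pl} {r : ℝ}
    (h : LineTangent L x r) : ∃ z ∈ (L : Set Pl) ∩ K x r, ∀ v ∈ L.direction, ⟪v, z - x⟫ = 0 := by
  obtain ⟨z, ⟨hzL, hzK⟩, huniq⟩ := h
  refine ⟨z, ⟨hzL, hzK⟩, fun v hv => ?_⟩
  let s : EuclideanGeometry.Sphere Pl := ⟨x, r⟩
  refine (EuclideanGeometry.Sphere.secondInter_eq_self_iff (s := s) (v := v)).mp (huniq _ ⟨?_, ?_⟩)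
  · exact AffineSubspace.vadd_mem_of_mem_direction (Submodule.smul_mem _ _ hv) hzL
  · exact (s.secondInter_dist z v).trans hzK

lemma LineTangent.inner_sq_eq {L : AffineSubspace ℝ Pl} {x : Pl} {r : ℝ}
    (hL : Module.finrank ℝ L.direction = 1) (h : LineTangent L x r) {w v : Pl} (hw : w ∈ L)
    (hv : v ∈ L.direction) : ⟪v, w - x⟫ ^ 2 = ‖v‖ ^ 2 * (dist w x ^ 2 - r ^ 2) := by
  obtain ⟨z, ⟨hzL, hzK⟩, hperp⟩ := h.exists_inner_eq_zero
  rcases eq_or_ne v 0 with rfl | hv0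
  · simp
  have hzw : z - w ∈ ℝ ∙ v := by
    rw [← eq_span_singleton_of_mem_of_finrank_eq_one hL hv hv0]
    exact AffineSubspace.vsub_mem_direction hzL hw
  obtain ⟨t, ht⟩ := Submodule.mem_span_singleton.mp hzw
  obtain rfl : z = w + t • v := by rw [ht]; abel
  have hzx : w + t • v - x = (w - x) + t • v := by abel
  have h1 : ⟪v, w - x⟫ + t * ‖v‖ ^ 2 = 0 := by
    simpa [hzx, inner_add_right, inner_smul_right, real_inner_self_eq_norm_sq] using hperp v hv
  have h2 : r ^ 2 = dist w x ^ 2 + 2 * t * ⟪v, w - x⟫ + t ^ 2 * ‖v‖ ^ 2 := by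
    rw [← hzK.out, dist_eq_norm, dist_eq_norm, hzx, norm_add_sq_real, norm_smul, inner_smul_right,
      real_inner_comm, Real.norm_eq_abs, mul_pow, sq_abs]
    ring
  linear_combination (⟪v, w - x⟫ + t * ‖v‖ ^ 2) * h1 + ‖v‖ ^ 2 * h2

/-- `!₂[p 1 - q 1, q 0 - p 0]` is `q - p` turned by a right angle, so these are the centers of the
circles through `p` and `q`. -/
def pencilCenter (p q : Pl) (τ : ℝ) : Pl :=
  midpoint ℝ p q + τ • !₂[p 1 - q 1, q 0 - p 0]

section Pencil

variable {p q : Pl}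

@[simp] lemma pencilCenter_apply_zero (τ : ℝ) :
    pencilCenter p q τ 0 = (p 0 + q 0) / 2 - τ * (q 1 - p 1) := by
  simp only [pencilCenter, midpoint_eq_smul_add, invOf_eq_inv, PiLp.add_apply, PiLp.smul_apply,
    smul_eq_mul, Matrix.cons_val_zero]
  ring

@[simp] lemma pencilCenter_apply_one (τ : ℝ) :
    pencilCenter p q τ 1 = (p 1 + q 1) / 2 + τ * (q 0 - p 0) := by
  simp only [pencilCenter, midpoint_eq_smul_add, invOf_eq_inv, PiLp.add_apply, PiLp.smul_apply,
    smul_eq_mul, Matrix.cons_val_one, Matrix.cons_val_fin_one]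
  ring

lemma exists_eq_pencilCenter (hpq : p ≠ q) {x : Pl} (h : dist p x = dist q x) :
    ∃ τ, x = pencilCenter p q τ := by
  have hD : (q 0 - p 0) ^ 2 + (q 1 - p 1) ^ 2 ≠ 0 := by
    rw [← Pl.dist_sq_eq]; exact pow_ne_zero 2 (dist_ne_zero.mpr hpq.symm)
  have hsq : dist p x ^ 2 = dist q x ^ 2 := by rw [h]
  rw [Pl.dist_sq_eq, Pl.dist_sq_eq] at hsq
  refine ⟨cross (q - p) (x - p) / ((q 0 - p 0) ^ 2 + (q 1 - p 1) ^ 2), ?_⟩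
  ext i
  fin_cases i <;>
    simp only [Fin.zero_eta, Fin.mk_one, Fin.isValue, cross, PiLp.sub_apply,
      pencilCenter_apply_zero, pencilCenter_apply_one] <;> field_simp
  · linear_combination (q 0 - p 0) * hsq
  · linear_combination (q 1 - p 1) * hsq

lemma dist_pencilCenter_sq_sub (z : Pl) (τ : ℝ) :
    dist z (pencilCenter p q τ) ^ 2 - dist p (pencilCenter p q τ) ^ 2 =
      ⟪z - p, z - q⟫ - 2 * τ * cross (q - p) (z - p) := by
  simp only [Pl.dist_sq_eq, Pl.inner_eq, cross, pencilCenter_apply_zero, pencilCenter_apply_one,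
    PiLp.sub_apply]
  ring

lemma dist_pencilCenter_sq (τ : ℝ) :
    dist p (pencilCenter p q τ) ^ 2 = dist p q ^ 2 * (1 / 4 + τ ^ 2) := by
  simp only [Pl.dist_sq_eq, pencilCenter_apply_zero, pencilCenter_apply_one]
  ring

lemma dist_right_pencilCenter (τ : ℝ) :
    dist q (pencilCenter p q τ) = dist p (pencilCenter p q τ) := by
  have h := dist_pencilCenter_sq_sub (p := p) (q := q) q τ
  simp only [sub_self, inner_zero_right, cross, PiLp.sub_apply] at h
  exact (pow_left_inj₀ dist_nonneg dist_nonneg two_ne_zero).mp (by linear_combination h)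

lemma inner_sub_pencilCenter (v w : Pl) (τ : ℝ) :
    ⟪v, w - pencilCenter p q τ⟫ = ⟪v, w - p⟫ - ⟪v, q - p⟫ / 2 - τ * cross (q - p) v := by
  simp only [Pl.inner_eq, cross, pencilCenter_apply_zero, pencilCenter_apply_one, PiLp.sub_apply]
  ring

variable {τ : Fin 3 → ℝ}

lemma not_forall_circleTangent_pencilCenter (hpq : p ≠ q) (hτ : Function.Injective τ)
    {y : Pl} {s : ℝ} (hs : 0 < s) :
    ¬ ∀ i, CircleTangent y s (pencilCenter p q (τ i)) (dist p (pencilCenter p q (τ i))) := by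
  intro h
  set D := dist p q ^ 2
  set P := ⟪y - p, y - q⟫
  set C := cross (q - p) (y - p)
  have key : ∀ i, (P - 2 * τ i * C - s ^ 2) ^ 2 = 4 * s ^ 2 * (D * (1 / 4 + τ i ^ 2)) := by
    intro i
    rw [← dist_pencilCenter_sq, ← dist_pencilCenter_sq_sub y (τ i)]
    linear_combination (h i).sq_eq
  obtain ⟨ha, hb, hc⟩ := eq_zero_of_quadratic_eq_zero_of_injective (a := 4 * C ^ 2 - 4 * s ^ 2 * D)
    (b := -4 * C * (P - s ^ 2)) (c := (P - s ^ 2) ^ 2 - s ^ 2 * D) hτ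
    (fun i => by linear_combination key i)
  have hsD : s ^ 2 * D = 0 := by
    rcases mul_eq_zero.mp hb with hC | hP
    · linear_combination -ha / 4 - C / 4 * hC
    · linear_combination -hc + (P - s ^ 2) * hP
  exact (mul_pos (pow_pos hs 2) (pow_pos (dist_pos.mpr hpq) 2)).ne' hsD

lemma not_forall_lineTangent_pencilCenter (hpq : p ≠ q) (hτ : Function.Injective τ)
    {L : AffineSubspace ℝ Pl} (hL : Module.finrank ℝ L.direction = 1) :
    ¬ ∀ i, LineTangent L (pencilCenter p q (τ i)) (dist p (pencilCenter p q (τ i))) := by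
  intro h
  obtain ⟨w, ⟨hw, -⟩, -⟩ := h 0
  obtain ⟨v, hv, hv0⟩ :=
    Submodule.exists_mem_ne_zero_of_ne_bot (Submodule.one_le_finrank_iff.mp hL.ge)
  have key : ∀ i, (⟪v, w - p⟫ - ⟪v, q - p⟫ / 2 - τ i * cross (q - p) v) ^ 2 =
      ‖v‖ ^ 2 * (⟪w - p, w - q⟫ - 2 * τ i * cross (q - p) (w - p)) := by
    intro i
    rw [← inner_sub_pencilCenter, ← dist_pencilCenter_sq_sub]
    exact (h i).inner_sq_eq hL hw hv
  set N := ‖v‖ ^ 2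
  set P := ⟪w - p, w - q⟫
  set C := cross (q - p) (w - p)
  set α := ⟪v, w - p⟫ - ⟪v, q - p⟫ / 2
  set γ := cross (q - p) v with hγ_def
  obtain ⟨ha, hb, -⟩ := eq_zero_of_quadratic_eq_zero_of_injective (a := γ ^ 2)
    (b := 2 * N * C - 2 * α * γ) (c := α ^ 2 - N * P) hτ (fun i => by linear_combination key i)
  have hγ : γ = 0 := pow_eq_zero_iff two_ne_zero |>.mp ha
  have hC : C = 0 := by
    have hN : N ≠ 0 := pow_ne_zero 2 (norm_ne_zero_iff.mpr hv0)
    simpa [hγ, hN] using hb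
  -- `γ = 0` and `C = 0` say that `L` is the line `pq`, which is secant to every circle here
  have hdir : L.direction = ℝ ∙ v := eq_span_singleton_of_mem_of_finrank_eq_one hL hv hv0
  have hqp : q - p ∈ L.direction := by
    rw [hdir]
    refine mem_span_singleton_of_cross_eq_zero hv0 ?_
    rw [hγ_def, cross] at hγ
    rw [cross]
    linear_combination -hγ
  have hpL : p ∈ L := by
    have hwp : w - p ∈ L.direction :=
      Submodule.span_singleton_le_iff_mem _ _ |>.mpr hqp <|
        mem_span_singleton_of_cross_eq_zero (sub_ne_zero.mpr hpq.symm) hC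
    rw [← AffineSubspace.vsub_right_mem_direction_iff_mem hw, vsub_eq_sub, ← neg_sub]
    exact neg_mem hwp
  have hqL : q ∈ L := (AffineSubspace.vsub_right_mem_direction_iff_mem hpL q).mp hqp
  exact hpq <| (h 0).unique ⟨hpL, rfl⟩ ⟨hqL, dist_right_pencilCenter _⟩

lemma forall_mem_K_pencilCenter_iff (hpq : p ≠ q) (hτ : Function.Injective τ) {z : Pl} :
    (∀ i, z ∈ K (pencilCenter p q (τ i)) (dist p (pencilCenter p q (τ i)))) ↔ z = p ∨ z = q := by
  refine ⟨fun hz => ?_, ?_⟩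
  · have key : ∀ i, ⟪z - p, z - q⟫ - 2 * τ i * cross (q - p) (z - p) = 0 := fun i => by
      rw [← dist_pencilCenter_sq_sub, (hz i).out, sub_self]
    have hC : cross (q - p) (z - p) = 0 := by
      have h01 : τ 0 - τ 1 ≠ 0 := sub_ne_zero.mpr (hτ.ne (by decide))
      refine (mul_eq_zero.mp (?_ : (τ 0 - τ 1) * cross (q - p) (z - p) = 0)).resolve_left h01
      linear_combination (key 1 - key 0) / 2
    have hP : ⟪z - p, z - q⟫ = 0 := by simpa [hC] using key 0
    obtain ⟨t, ht⟩ := Submodule.mem_span_singleton.mp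
      (mem_span_singleton_of_cross_eq_zero (sub_ne_zero.mpr hpq.symm) hC)
    obtain rfl : z = p + t • (q - p) := by rw [ht]; abel
    have hD : ‖q - p‖ ^ 2 ≠ 0 := pow_ne_zero 2 (norm_ne_zero_iff.mpr (sub_ne_zero.mpr hpq.symm))
    have ht01 : t * (t - 1) * ‖q - p‖ ^ 2 = 0 := by
      rw [show p + t • (q - p) - q = (t - 1) • (q - p) by rw [sub_smul, one_smul]; abel,
        add_sub_cancel_left, inner_smul_left, inner_smul_right, real_inner_self_eq_norm_sq] at hP
      simpa [mul_assoc] using hP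
    rcases mul_eq_zero.mp ((mul_eq_zero.mp ht01).resolve_right hD) with rfl | ht1
    · simp
    · obtain rfl : t = 1 := by linarith
      simp
  · rintro (rfl | rfl) i
    · rfl
    · exact dist_right_pencilCenter _

lemma nat_card_apolloniusSolutions_pencilCenter (hpq : p ≠ q) (hτ : Function.Injective τ) :
    Nat.card (ApolloniusSolutions (fun i => pencilCenter p q (τ i))
      (fun i => dist p (pencilCenter p q (τ i)))) = 2 := by
  have : IsEmpty {ys : Pl × ℝ // 0 < ys.2 ∧ ∀ i,
      CircleTangent ys.1 ys.2 (pencilCenter p q (τ i)) (dist p (pencilCenter p q (τ i)))} :=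
    ⟨fun ⟨_, hs, h⟩ => not_forall_circleTangent_pencilCenter hpq hτ hs h⟩
  have : IsEmpty {L : AffineSubspace ℝ Pl // Module.finrank ℝ L.direction = 1 ∧ ∀ i,
      LineTangent L (pencilCenter p q (τ i)) (dist p (pencilCenter p q (τ i)))} :=
    ⟨fun ⟨_, hL, h⟩ => not_forall_lineTangent_pencilCenter hpq hτ hL h⟩
  rw [ApolloniusSolutions, Nat.card_congr ((Equiv.emptySum _ _).trans (Equiv.emptySum _ _)),
    Nat.card_congr (Equiv.subtypeEquivRight (q := (· ∈ ({p, q} : Set Pl)))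
      fun z => forall_mem_K_pencilCenter_iff hpq hτ), Nat.card_coe_set_eq, Set.ncard_pair hpq]

lemma nat_card_apolloniusSolutions_of_two_common_points {x : Fin 3 → Pl} {r : Fin 3 → ℝ}
    (hxr : Function.Injective fun i => (x i, r i)) (hpq : p ≠ q)
    (hp : ∀ i, p ∈ K (x i) (r i)) (hq : ∀ i, q ∈ K (x i) (r i)) :
    Nat.card (ApolloniusSolutions x r) = 2 := by
  choose τ hτ using fun i => exists_eq_pencilCenter hpq ((hp i).out.trans (hq i).out.symm)
  obtain rfl : x = fun i => pencilCenter p q (τ i) := funext hτ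
  obtain rfl : r = fun i => dist p (pencilCenter p q (τ i)) := funext fun i => (hp i).out.symm
  exact nat_card_apolloniusSolutions_pencilCenter hpq fun i j hij => hxr (by simp [hij])

end Pencil

theorem apollonius_two_common_points_two_solutions_general (x₁ x₂ x₃ : Pl) (r₁ r₂ r₃ : ℝ)
    (hne₁₂ : (x₁, r₁) ≠ (x₂, r₂)) (hne₁₃ : (x₁, r₁) ≠ (x₃, r₃))
    (hne₂₃ : (x₂, r₂) ≠ (x₃, r₃))
    (hpq : ∃ p q : Pl, p ≠ q ∧
      p ∈ K x₁ r₁ ∩ K x₂ r₂ ∩ K x₃ r₃ ∧ q ∈ K x₁ r₁ ∩ K x₂ r₂ ∩ K x₃ r₃) :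
    Nat.card (ApolloniusSolutions ![x₁, x₂, x₃] ![r₁, r₂, r₃]) = 2 := by
  obtain ⟨p, q, hpq, ⟨⟨hp₁, hp₂⟩, hp₃⟩, ⟨⟨hq₁, hq₂⟩, hq₃⟩⟩ := hpq
  refine nat_card_apolloniusSolutions_of_two_common_points ?_ hpq ?_ ?_
  · intro i j hij
    fin_cases i <;> fin_cases j <;> simp_all [eq_comm]
  · intro i; fin_cases i; exacts [hp₁, hp₂, hp₃]
  · intro i; fin_cases i; exacts [hq₁, hq₂, hq₃]

/-- Three pairwise distinct circles having two common points admit exactly 2 Apollonius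
solutions (the two common points). -/
theorem apollonius_two_common_points_two_solutions (x₁ x₂ x₃ : Pl) (r₁ r₂ r₃ : ℝ)
    (h₁ : 0 < r₁) (h₂ : 0 < r₂) (h₃ : 0 < r₃)
    (hne₁₂ : (x₁, r₁) ≠ (x₂, r₂)) (hne₁₃ : (x₁, r₁) ≠ (x₃, r₃))
    (hne₂₃ : (x₂, r₂) ≠ (x₃, r₃))
    (hpq : ∃ p q : Pl, p ≠ q ∧
      p ∈ K x₁ r₁ ∩ K x₂ r₂ ∩ K x₃ r₃ ∧ q ∈ K x₁ r₁ ∩ K x₂ r₂ ∩ K x₃ r₃) :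
    Nat.card (ApolloniusSolutions ![x₁, x₂, x₃] ![r₁, r₂, r₃]) = 2 :=
  apollonius_two_common_points_two_solutions_general x₁ x₂ x₃ r₁ r₂ r₃ hne₁₂ hne₁₃ hne₂₃ hpq
end
end
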